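/- arXiv:1408.5326 — 6 statements merged into one kernel-verified Lean document; each statement's English description precedes it below -/
import Mathlib

section
/- Let h ≥ n ≥ 1 be integers, set m = h − n + 1, and let w : {1,…,h} × {1,…,n} → R be any function into a commutative ring. Then the sum over all (n−1)-tuples (π₁,…,π_{n−1}) ∈ Π^{(n−1)}_{h,n} of the product of w(i,j) over all grid points (i,j) NOT belonging to π₁ ∪ ⋯ ∪ π_{n−1} equals the sum over all φ = (j₁,…,j_m) ∈ Φ_{m,n} of ∏_{k=1}^{m} w(k + j_k − 1, n − j_k + 1). -/
open Finset

/-- `S` is the vertex set of an up/right lattice path from `(1, a)` to `(h, b)`. -/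
def IsUpRightPath (h a b : ℕ) (S : Finset (ℕ × ℕ)) : Prop :=
  ∃ (L : ℕ) (p : ℕ → ℕ × ℕ),
    p 0 = (1, a) ∧ p L = (h, b) ∧
    (∀ k, k < L → p (k + 1) = ((p k).1 + 1, (p k).2) ∨ p (k + 1) = ((p k).1, (p k).2 + 1)) ∧
    S = (Finset.range (L + 1)).image p

/-- `PiTuples h n r k` is the set `Π^{(r)}_{h,k}` of `r`-tuples of pairwise vertex-disjoint
up/right lattice paths in `{1,…,h} × {1,…,n}`, where the `i`-th path (for `i : Fin r`,
playing the role of `i+1 ∈ {1,…,r}`) goes from `(1, i+1)` to `(h, k - r + (i+1))`. -/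
noncomputable def PiTuples (h n r k : ℕ) : Finset (Fin r → Finset (ℕ × ℕ)) :=
  @Finset.filter _
    (fun π => (∀ i : Fin r, IsUpRightPath h (i.1 + 1) (k - r + (i.1 + 1)) (π i)) ∧
      Pairwise fun i j : Fin r => Disjoint (π i) (π j))
    (Classical.decPred _)
    (Fintype.piFinset fun _ : Fin r => (Finset.Icc 1 h ×ˢ Finset.Icc 1 n).powerset)

/-- `Phi m n` is the set `Φ_{m,n}` of `m`-tuples `(j₁,…,j_m)` of integers with
`1 ≤ j₁ ≤ j₂ ≤ ⋯ ≤ j_m ≤ n` (indexed by `Fin m`). -/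
noncomputable def Phi (m n : ℕ) : Finset (Fin m → ℕ) :=
  @Finset.filter _ Monotone (Classical.decPred _)
    (Fintype.piFinset fun _ : Fin m => Finset.Icc 1 n)

/-! Each path of a tuple in `Π^{(n-1)}_{h,n}` climbs from row `i` to row `i + 1`, so it is
determined by the column `c_i` of its up-step, and disjointness of consecutive paths says exactly
that `c_i` strictly decreases. Writing `c_{n-v} = A(v) + v`, the uncovered cells of row
`n + 1 - v` are the columns `A(v-1) + v, …, A(v) + v - 1`; recording `v` for each uncovered cell
from left to right gives a sequence `j ∈ Φ_{m,n}` with `A(v) = #{k | j_k ≤ v}`. This is a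
bijection, and it carries the uncovered cells onto the cells `(k + j_k - 1, n - j_k + 1)`. -/

def stepPath (h a c : ℕ) : Finset (ℕ × ℕ) :=
  Icc 1 c ×ˢ {a} ∪ Icc c h ×ˢ {a + 1}

lemma mem_stepPath {h a c x y : ℕ} :
    (x, y) ∈ stepPath h a c ↔ (1 ≤ x ∧ x ≤ c ∧ y = a) ∨ (c ≤ x ∧ x ≤ h ∧ y = a + 1) := by
  simp only [stepPath, mem_union, mem_product, mem_Icc, mem_singleton, and_assoc]

lemma stepPath_injOn (h a : ℕ) : Set.InjOn (stepPath h a) (Set.Ici 1) := by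
  intro c hc c' hc' e
  have key : ∀ {c c'}, 1 ≤ c → stepPath h a c = stepPath h a c' → c ≤ c' := fun {c c'} hc e => by
    have hmem : (c, a) ∈ stepPath h a c' := e ▸ mem_stepPath.2 (Or.inl ⟨hc, le_rfl, rfl⟩)
    rw [mem_stepPath] at hmem
    omega
  exact le_antisymm (key hc e) (key hc' e.symm)

lemma disjoint_stepPath_iff {h a a' c c' : ℕ} (haa : a < a') (hc : 1 ≤ c) (hch : c ≤ h) :
    Disjoint (stepPath h a c) (stepPath h a' c') ↔ (a' = a + 1 → c' < c) := by
  constructor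
  · rintro hd rfl
    by_contra! hcc
    exact disjoint_left.1 hd (mem_stepPath.2 (Or.inr ⟨le_rfl, hch, rfl⟩))
      (mem_stepPath.2 (Or.inl ⟨hc, hcc, rfl⟩))
  · intro hcc
    refine disjoint_left.2 fun ⟨x, y⟩ hq hq' => ?_
    rw [mem_stepPath] at hq hq'
    omega

def stepPoint (a c k : ℕ) : ℕ × ℕ := if k < c then (k + 1, a) else (k, a + 1)

lemma image_stepPoint {h a c : ℕ} (hch : c ≤ h) :
    (range (h + 1)).image (stepPoint a c) = stepPath h a c := by
  ext ⟨x, y⟩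
  simp only [mem_image, mem_range, mem_stepPath, stepPoint]
  constructor
  · rintro ⟨k, hk, hpk⟩
    split_ifs at hpk <;> simp only [Prod.mk.injEq] at hpk <;> omega
  · rintro (⟨hx, hxc, rfl⟩ | ⟨hcx, hxh, rfl⟩)
    · exact ⟨x - 1, by omega, by rw [if_pos (show x - 1 < c by omega), Nat.sub_add_cancel hx]⟩
    · exact ⟨x, by omega, by rw [if_neg (show ¬x < c by omega)]⟩

def IsUpRightWalk (L : ℕ) (p : ℕ → ℕ × ℕ) : Prop :=
  ∀ k, k < L → p (k + 1) = ((p k).1 + 1, (p k).2) ∨ p (k + 1) = ((p k).1, (p k).2 + 1)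

namespace IsUpRightWalk

variable {L : ℕ} {p : ℕ → ℕ × ℕ}

lemma fst_add_snd (hp : IsUpRightWalk L p) {k : ℕ} (hk : k ≤ L) :
    (p k).1 + (p k).2 = (p 0).1 + (p 0).2 + k := by
  induction k with
  | zero => rfl
  | succ k ih =>
    have := ih (by omega)
    rcases hp k (by omega) with e | e <;> rw [e] <;> omega

lemma snd_mono (hp : IsUpRightWalk L p) {k l : ℕ} (hkl : k ≤ l) (hl : l ≤ L) :
    (p k).2 ≤ (p l).2 := by
  induction l, hkl using Nat.le_induction with
  | base => exact le_rfl
  | succ l hkl ih =>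
    refine (ih (by omega)).trans ?_
    rcases hp l (by omega) with e | e <;> simp [e]

end IsUpRightWalk

lemma isUpRightWalk_stepPoint (L a c : ℕ) : IsUpRightWalk L (stepPoint a c) := fun k _ => by
  unfold stepPoint
  grind

lemma IsUpRightPath.exists_eq_stepPath {h a : ℕ} {S : Finset (ℕ × ℕ)}
    (hS : IsUpRightPath h a (a + 1) S) : ∃ c ∈ Icc 1 h, S = stepPath h a c := by
  obtain ⟨L, p, h0, hL, hp, rfl⟩ := hS
  replace hp : IsUpRightWalk L p := hp
  have hsum : ∀ k ≤ L, (p k).1 + (p k).2 = a + 1 + k := fun k hk => by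
    rw [hp.fst_add_snd hk, h0]; omega
  have hLh : L = h := by have := hsum L le_rfl; rw [hL] at this; omega
  have hex : ∃ k, (p k).2 = a + 1 := ⟨L, by rw [hL]⟩
  set t := Nat.find hex
  have htL : t ≤ L := Nat.find_min' hex (by rw [hL])
  have ht0 : t ≠ 0 := fun ht => by have := (Nat.find_eq_zero hex).1 ht; rw [h0] at this; omega
  have hsnd : ∀ k ≤ L, (p k).2 = if k < t then a else a + 1 := fun k hk => by
    have hlo := hp.snd_mono (Nat.zero_le k) hk
    have hhi := hp.snd_mono hk le_rfl
    rw [h0] at hlo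
    rw [hL] at hhi
    split_ifs with hkt
    · have := Nat.find_min hex hkt
      omega
    · have := hp.snd_mono (not_lt.1 hkt) hk
      rw [Nat.find_spec hex] at this
      omega
  refine ⟨t, mem_Icc.2 ⟨by omega, by omega⟩, ?_⟩
  rw [← image_stepPoint (a := a) (show t ≤ h by omega), ← hLh]
  refine image_congr fun k hk => ?_
  have hk : k ≤ L := by simp only [coe_range, Set.mem_Iio] at hk; omega
  have := hsum k hk
  have := hsnd k hk
  unfold stepPoint
  split_ifs at * <;> ext <;> simp only <;> omega

lemma isUpRightPath_iff_exists_eq_stepPath {h a : ℕ} {S : Finset (ℕ × ℕ)} :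
    IsUpRightPath h a (a + 1) S ↔ ∃ c ∈ Icc 1 h, S = stepPath h a c := by
  refine ⟨IsUpRightPath.exists_eq_stepPath, ?_⟩
  rintro ⟨c, hc, rfl⟩
  rw [mem_Icc] at hc
  refine ⟨h, stepPoint a c, ?_, ?_, isUpRightWalk_stepPoint h a c, (image_stepPoint hc.2).symm⟩
  · rw [stepPoint, if_pos (by omega)]
  · rw [stepPoint, if_neg (by omega)]

def stepTuple (h : ℕ) {r : ℕ} (c : Fin r → ℕ) : Fin r → Finset (ℕ × ℕ) :=
  fun i => stepPath h (i + 1) (c i)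

/-- `Antitone (c i + i)` is the strict decrease `c (i + 1) < c i` forced by disjointness. -/
theorem mem_piTuples_iff {h n r : ℕ} (hrn : r < n) {π : Fin r → Finset (ℕ × ℕ)} :
    π ∈ PiTuples h n r (r + 1) ↔
      ∃ c : Fin r → ℕ, (∀ i, c i ∈ Icc 1 h) ∧ Antitone (fun i => c i + i) ∧ π = stepTuple h c := by
  have hpath : ∀ (i : Fin r) S, IsUpRightPath h (i + 1) (r + 1 - r + (i + 1)) S ↔
      ∃ c ∈ Icc 1 h, S = stepPath h (i + 1) c := fun i S => by
    rw [show r + 1 - r + (i + 1) = i + 1 + 1 by omega, isUpRightPath_iff_exists_eq_stepPath]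
  simp only [PiTuples, mem_filter, Fintype.mem_piFinset, mem_powerset, hpath]
  constructor
  · rintro ⟨-, hπ, hdisj⟩
    choose c hc hπ using hπ
    refine ⟨c, hc, (antitone_iff_forall_covBy _).2 fun i i' hii => ?_, funext hπ⟩
    have hsucc := Nat.covBy_iff_add_one_eq.1 (Fin.covBy_iff.1 hii)
    have hd : Disjoint (π i) (π i') := hdisj hii.1.ne
    rw [hπ, hπ, disjoint_stepPath_iff (by omega) (mem_Icc.1 (hc i)).1 (mem_Icc.1 (hc i)).2] at hd
    have := hd (by omega)
    omega
  · rintro ⟨c, hc, hb, rfl⟩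
    refine ⟨fun i => ?_, fun i => ⟨c i, hc i, rfl⟩, (pairwise_disjoint_on _).2 fun i i' hii => ?_⟩
    · rintro ⟨x, y⟩ hq
      have := mem_Icc.1 (hc i)
      have := i.2
      rw [stepTuple, mem_stepPath] at hq
      simp only [mem_product, mem_Icc]
      omega
    · have hlt : (i : ℕ) < i' := hii
      have := hb hii.le
      rw [stepTuple, stepTuple, disjoint_stepPath_iff (by omega) (mem_Icc.1 (hc i)).1
        (mem_Icc.1 (hc i)).2]
      intro _
      simp only at this
      omega

section Counting

variable {m : ℕ}

def countLE (j : Fin m → ℕ) (v : ℕ) : ℕ := #{k | j k ≤ v}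

lemma countLE_mono (j : Fin m → ℕ) : Monotone (countLE j) := fun _ _ hvv =>
  card_le_card (monotone_filter_right _ fun _ _ hk => hk.trans hvv)

lemma countLE_le_card (j : Fin m → ℕ) (v : ℕ) : countLE j v ≤ m :=
  (card_filter_le _ _).trans_eq (card_fin m)

lemma countLE_eq_zero {j : Fin m → ℕ} {v : ℕ} (hj : ∀ k, v < j k) : countLE j v = 0 := by
  simp [countLE, filter_false_of_mem fun k _ => not_le.2 (hj k)]

lemma countLE_eq_card {j : Fin m → ℕ} {v : ℕ} (hj : ∀ k, j k ≤ v) : countLE j v = m := by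
  simp [countLE, filter_true_of_mem fun k _ => hj k]

lemma countLE_le_iff {j : Fin m → ℕ} (hj : Monotone j) (k : Fin m) (v : ℕ) :
    countLE j v ≤ k ↔ v < j k := by
  constructor
  · intro hA
    by_contra! hjk
    have hsub : Iic k ⊆ ({l | j l ≤ v} : Finset _) := fun l hl => by
      simpa using (hj (mem_Iic.1 hl)).trans hjk
    have := card_le_card hsub
    rw [Fin.card_Iic] at this
    exact absurd hA (by unfold countLE; omega)
  · intro hv
    have hsub : ({l | j l ≤ v} : Finset _) ⊆ Iio k := fun l hl => by
      simp only [mem_filter, mem_univ, true_and] at hl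
      exact mem_Iio.2 (lt_of_not_ge fun hkl => absurd (hj hkl) (by omega))
    simpa [countLE, Fin.card_Iio] using card_le_card hsub

lemma countLE_le_iff_of_antitone {j : Fin m → ℕ} (hj : Antitone j) (k : Fin m) (v : ℕ) :
    countLE j v ≤ k ↔ v < j k.rev := by
  have hrev : countLE j v = countLE (j ∘ Fin.rev) v := by
    simp only [countLE, card_filter]
    exact (Equiv.sum_comp Fin.revPerm fun k => if j k ≤ v then 1 else 0).symm
  rw [hrev, countLE_le_iff (hj.comp Fin.rev_anti), Function.comp_apply]

lemma eq_succ_iff_countLE {j : Fin m → ℕ} (hj : Monotone j) (k : Fin m) (v : ℕ) :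
    j k = v + 1 ↔ countLE j v ≤ k ∧ k < countLE j (v + 1) := by
  have := countLE_le_iff hj k v
  have := countLE_le_iff hj k (v + 1)
  omega

end Counting

lemma Fin.card_filter_le_val (N t : ℕ) : #{i : Fin N | t ≤ (i : ℕ)} = N - t := by
  have := card_filter_add_card_filter_not (s := univ) (p := fun i : Fin N => (i : ℕ) < t)
  simp only [not_lt, Fin.card_filter_val_lt, card_univ, Fintype.card_fin] at this
  omega

lemma mem_Phi {m n : ℕ} {j : Fin m → ℕ} : j ∈ Phi m n ↔ Monotone j ∧ ∀ k, j k ∈ Icc 1 n := by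
  simp only [Phi, mem_filter, Fintype.mem_piFinset, and_comm]

def turnsOf (r : ℕ) {m : ℕ} (j : Fin m → ℕ) : Fin r → ℕ :=
  fun i => countLE j (r - i) + (r - i)

/-- `j k - 1` counts the rows `v < j k`, i.e. the paths `i` with `A (r - i) ≤ k`, where
`c i + i = A (r - i) + r`. -/
def ofTurns (m : ℕ) {r : ℕ} (c : Fin r → ℕ) : Fin m → ℕ :=
  fun k => 1 + countLE (fun i => c i + i) (k + r)

section Bijection

variable {h m r : ℕ}

lemma turnsOf_mem_Icc (hrh : r ≤ h) (j : Fin (h - r) → ℕ) (i : Fin r) :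
    turnsOf r j i ∈ Icc 1 h := by
  have := countLE_le_card j (r - i)
  have := i.2
  rw [turnsOf, mem_Icc]
  omega

lemma antitone_turnsOf_add (j : Fin m → ℕ) : Antitone fun i : Fin r => turnsOf r j i + i := by
  intro i i' hii
  have hii : (i : ℕ) ≤ i' := hii
  have := countLE_mono j (show r - i' ≤ r - i by omega)
  have := i'.2
  simp only [turnsOf]
  omega

lemma ofTurns_mem_Phi (c : Fin r → ℕ) : ofTurns m c ∈ Phi m (r + 1) := by
  refine mem_Phi.2 ⟨fun k k' hkk => ?_, fun k => ?_⟩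
  · exact Nat.add_le_add_left (countLE_mono _ (Nat.add_le_add_right (Fin.le_def.1 hkk) r)) 1
  · have := countLE_le_card (fun i => c i + i) (k + r)
    rw [ofTurns, mem_Icc]
    omega

lemma ofTurns_turnsOf {j : Fin m → ℕ} (hj : j ∈ Phi m (r + 1)) : ofTurns m (turnsOf r j) = j := by
  obtain ⟨hmono, hbd⟩ := mem_Phi.1 hj
  funext k
  have hk := mem_Icc.1 (hbd k)
  have hfilter : univ.filter (fun i : Fin r => turnsOf r j i + i ≤ k + r) =
      univ.filter (fun i : Fin r => r + 1 - j k ≤ (i : ℕ)) := filter_congr fun i _ => by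
    have := countLE_le_iff hmono k (r - i)
    have := i.2
    rw [turnsOf]
    omega
  rw [ofTurns, countLE, hfilter, Fin.card_filter_le_val]
  omega

lemma turnsOf_ofTurns {c : Fin r → ℕ} (hc : ∀ i, c i ∈ Icc 1 h)
    (hb : Antitone fun i => c i + i) : turnsOf r (ofTurns (h - r) c) = c := by
  funext i
  have hi := i.2
  have hlo : r ≤ c i + i := by
    have h1 : c ⟨r - 1, by omega⟩ + (r - 1) ≤ c i + i := hb (Fin.le_def.2 (by simp; omega))
    have h2 := (mem_Icc.1 (hc ⟨r - 1, by omega⟩)).1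
    omega
  have hhi : c i + i ≤ h := by
    have h1 : c i + i ≤ c ⟨0, by omega⟩ + 0 := hb (Fin.le_def.2 (by simp))
    have h2 := (mem_Icc.1 (hc ⟨0, by omega⟩)).2
    omega
  have hfilter : univ.filter (fun k : Fin (h - r) => ofTurns (h - r) c k ≤ r - i) =
      univ.filter (fun k : Fin (h - r) => (k : ℕ) < c i + i - r) := filter_congr fun k _ => by
    have := countLE_le_iff_of_antitone hb i.rev (k + r)
    rw [Fin.rev_rev, Fin.val_rev] at this
    rw [ofTurns]
    omega
  rw [turnsOf, countLE, hfilter, Fin.card_filter_val_lt]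
  omega

end Bijection

theorem piTuples_eq_image_Phi {h r : ℕ} (hrh : r ≤ h) :
    PiTuples h (r + 1) r (r + 1) =
      (Phi (h - r) (r + 1)).image fun j => stepTuple h (turnsOf r j) := by
  ext π
  rw [mem_piTuples_iff (Nat.lt_succ_self r), mem_image]
  constructor
  · rintro ⟨c, hc, hb, rfl⟩
    exact ⟨ofTurns (h - r) c, ofTurns_mem_Phi c, by rw [turnsOf_ofTurns hc hb]⟩
  · rintro ⟨j, -, rfl⟩
    exact ⟨_, turnsOf_mem_Icc hrh j, antitone_turnsOf_add j, rfl⟩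

lemma injOn_stepTuple_turnsOf {h r : ℕ} (hrh : r ≤ h) :
    Set.InjOn (fun j : Fin (h - r) → ℕ => stepTuple h (turnsOf r j)) ↑(Phi (h - r) (r + 1)) := by
  intro j hj j' hj' e
  rw [← ofTurns_turnsOf hj, ← ofTurns_turnsOf hj']
  congr 1
  funext i
  exact stepPath_injOn h (i + 1) (mem_Icc.1 (turnsOf_mem_Icc hrh j i)).1
    (mem_Icc.1 (turnsOf_mem_Icc hrh j' i)).1 (congrFun e i)

/-- Row `y` is row `n + 1 - v` with `v = r + 2 - y`; in the top and bottom rows, which meet only one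
path, the missing bound comes from `A 0 = 0` and `A (r + 1) = m`. -/
lemma notMem_biUnion_stepTuple_turnsOf_iff {h r x y : ℕ} {j : Fin (h - r) → ℕ} (hrh : r ≤ h)
    (hj : ∀ k, j k ∈ Icc 1 (r + 1)) (hx : x ∈ Icc 1 h) (hy : y ∈ Icc 1 (r + 1)) :
    (x, y) ∉ univ.biUnion (stepTuple h (turnsOf r j)) ↔
      countLE j (r + 1 - y) + (r + 2 - y) ≤ x ∧ x < countLE j (r + 2 - y) + (r + 2 - y) := by
  rw [mem_Icc] at hx hy
  have hbot : countLE j 0 = 0 := countLE_eq_zero fun k => (mem_Icc.1 (hj k)).1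
  have htop : countLE j (r + 1) = h - r := countLE_eq_card fun k => (mem_Icc.1 (hj k)).2
  simp only [mem_biUnion, mem_univ, true_and, not_exists, stepTuple, turnsOf, mem_stepPath]
  constructor
  · intro hnot
    constructor
    · rcases Nat.lt_or_ge y (r + 1) with hyr | hyr
      · have := hnot ⟨y - 1, by omega⟩
        simp only at this
        rw [show r - (y - 1) = r + 1 - y by omega] at this
        omega
      · rw [show r + 1 - y = 0 by omega, hbot]
        omega
    · rcases Nat.lt_or_ge 1 y with hy1 | hy1
      · have := hnot ⟨y - 2, by omega⟩
        simp only at this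
        rw [show r - (y - 2) = r + 2 - y by omega] at this
        omega
      · rw [show r + 2 - y = r + 1 by omega, htop]
        omega
  · rintro ⟨hlo, hhi⟩ i (⟨-, hxc, hyi⟩ | ⟨hcx, -, hyi⟩)
    · rw [show r - i = r + 1 - y by omega] at hxc
      omega
    · rw [show r - i = r + 2 - y by omega] at hcx
      omega

theorem grid_sdiff_biUnion_stepTuple_turnsOf {h r : ℕ} (hrh : r ≤ h) {j : Fin (h - r) → ℕ}
    (hj : j ∈ Phi (h - r) (r + 1)) :
    (Icc 1 h ×ˢ Icc 1 (r + 1)) \ univ.biUnion (stepTuple h (turnsOf r j)) =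
      univ.image fun k : Fin (h - r) => (k.1 + 1 + j k - 1, r + 1 - j k + 1) := by
  obtain ⟨hmono, hbd⟩ := mem_Phi.1 hj
  ext ⟨x, y⟩
  simp only [mem_sdiff, mem_product, mem_image, mem_univ, true_and]
  constructor
  · rintro ⟨⟨hx, hy⟩, hnot⟩
    rw [notMem_biUnion_stepTuple_turnsOf_iff hrh hbd hx hy] at hnot
    rw [mem_Icc] at hx hy
    have hk : x - (r + 2 - y) < h - r := by
      have := countLE_le_card j (r + 2 - y)
      omega
    have hjk := (eq_succ_iff_countLE hmono ⟨x - (r + 2 - y), hk⟩ (r + 1 - y)).2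
      ⟨by simp only; omega, by simp only; rw [show r + 1 - y + 1 = r + 2 - y by omega]; omega⟩
    refine ⟨⟨x - (r + 2 - y), hk⟩, ?_⟩
    rw [hjk, Prod.mk.injEq, Fin.val_mk]
    omega
  · rintro ⟨k, hk⟩
    rw [Prod.mk.injEq] at hk
    have := mem_Icc.1 (hbd k)
    have := k.2
    have hA := (eq_succ_iff_countLE hmono k (r + 1 - y)).1 (by omega)
    rw [show r + 1 - y + 1 = r + 2 - y by omega] at hA
    refine ⟨⟨mem_Icc.2 (by omega), mem_Icc.2 (by omega)⟩, ?_⟩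
    rw [notMem_biUnion_stepTuple_turnsOf_iff hrh hbd (mem_Icc.2 (by omega)) (mem_Icc.2 (by omega))]
    omega

/-- With `m = h - n + 1`, the sum over all `(n-1)`-tuples in `Π^{(n-1)}_{h,n}` of the product
of `w(i,j)` over all grid points `(i,j)` not belonging to the union of the paths equals the
sum over all `φ = (j₁,…,j_m) ∈ Φ_{m,n}` of `∏_{k=1}^{m} w(k + j_k - 1, n - j_k + 1)`. -/
theorem sum_complement_piTuples_eq_sum_Phi {R : Type*} [CommRing R]
    (h n : ℕ) (hn : 1 ≤ n) (hnh : n ≤ h) (w : ℕ × ℕ → R) :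
    ∑ π ∈ PiTuples h n (n - 1) n,
        ∏ q ∈ (Finset.Icc 1 h ×ˢ Finset.Icc 1 n) \ Finset.univ.biUnion π, w q
      = ∑ j ∈ Phi (h - n + 1) n,
          ∏ k : Fin (h - n + 1), w (k.1 + 1 + j k - 1, n - j k + 1) := by
  obtain ⟨r, rfl⟩ : ∃ r, n = r + 1 := ⟨n - 1, by omega⟩
  have hrh : r ≤ h := by omega
  rw [Nat.add_sub_cancel, show h - (r + 1) + 1 = h - r by omega, piTuples_eq_image_Phi hrh,
    sum_image (injOn_stepTuple_turnsOf hrh)]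
  refine sum_congr rfl fun j hj => ?_
  rw [grid_sdiff_biUnion_stepTuple_turnsOf hrh hj, prod_image]
  intro k _ k' _ e
  have := mem_Icc.1 ((mem_Phi.1 hj).2 k)
  have := mem_Icc.1 ((mem_Phi.1 hj).2 k')
  rw [Prod.mk.injEq] at e
  exact Fin.ext (by omega)
end

section
/- Let h ≥ n ≥ 1 be integers, set m = h − n + 1, let w : {1,…,h} × {1,…,n} → ℝ_{>0}, and let t₁,…,tₙ be positive reals (tₖ playing the role of the geometric-RSK entry t_{m+k−1,k}) satisfying the two geometric RSK relations: t₁·t₂⋯tₙ = Σ_{(π₁,…,πₙ)∈Π^{(n)}_{h,n}} ∏_{(i,j)∈π₁∪⋯∪πₙ} w(i,j) and t₂·t₃⋯tₙ = Σ_{(π₁,…,π_{n−1})∈Π^{(n−1)}_{h,n}} ∏_{(i,j)∈π₁∪⋯∪π_{n−1}} w(i,j). Then 1/t₁ = Σ_{φ=(j₁,…,j_m)∈Φ_{m,n}} ∏_{k=1}^{m} g(k, j_k), where g(i,j) = 1 / w(i + j − 1, n − j + 1). -/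
open Finset

namespace GRSK


lemma walk_snd_mono {p : ℕ → ℕ × ℕ} {L : ℕ}
    (hstep : ∀ k, k < L → p (k + 1) = ((p k).1 + 1, (p k).2) ∨ p (k + 1) = ((p k).1, (p k).2 + 1)) :
    ∀ k l, k ≤ l → l ≤ L → (p k).2 ≤ (p l).2 := by
  intro k l hkl
  induction l, hkl using Nat.le_induction with
  | base => intro _; exact le_rfl
  | succ l hkl ih =>
    intro hlL
    have h1 := ih (by omega)
    rcases hstep l (by omega) with hs | hs <;> rw [hs] <;> simp <;> omega

lemma walk_sum {p : ℕ → ℕ × ℕ} {L a : ℕ} (h0 : p 0 = (1, a))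
    (hstep : ∀ k, k < L → p (k + 1) = ((p k).1 + 1, (p k).2) ∨ p (k + 1) = ((p k).1, (p k).2 + 1)) :
    ∀ k, k ≤ L → (p k).1 + (p k).2 = 1 + a + k := by
  intro k
  induction k with
  | zero => intro _; rw [h0]; simp
  | succ k ih =>
    intro hk
    have h1 := ih (by omega)
    rcases hstep k (by omega) with hs | hs <;> rw [hs] <;> simp <;> omega

lemma hline_eq (h a : ℕ) :
    (range h).image (fun k => (1 + k, a)) = (Icc 1 h).image (·, a) := by
  ext ⟨c, ρ⟩
  simp only [mem_image, mem_range, mem_Icc, Prod.mk.injEq]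
  constructor
  · rintro ⟨k, hk, h1, h2⟩; exact ⟨1 + k, ⟨by omega, by omega⟩, by omega, h2⟩
  · rintro ⟨b, hb, h1, h2⟩; exact ⟨b - 1, by omega, by omega, h2⟩

/-- The horizontal path. -/
lemma isUpRightPath_self_iff {h a : ℕ} (hh : 1 ≤ h) {S : Finset (ℕ × ℕ)} :
    IsUpRightPath h a a S ↔ S = (Icc 1 h).image (·, a) := by
  constructor
  · rintro ⟨L, p, h0, hL, hstep, rfl⟩
    have hsum := walk_sum h0 hstep
    have hmono := walk_snd_mono hstep
    have hpk : ∀ k, k ≤ L → p k = (1 + k, a) := by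
      intro k hk
      have h1 : (p k).2 ≤ a := by have := hmono k L hk le_rfl; rw [hL] at this; exact this
      have h2 : a ≤ (p k).2 := by have := hmono 0 k (Nat.zero_le _) hk; rw [h0] at this; exact this
      have h3 := hsum k hk
      rw [Prod.ext_iff]; constructor <;> simp <;> omega
    have hLh : h = 1 + L := by
      have := hpk L le_rfl; rw [hL, Prod.ext_iff] at this; simpa using this.1
    have himc : (range (L + 1)).image p = (range (L + 1)).image (fun k => (1 + k, a)) := by
      apply Finset.image_congr
      intro k hk
      simp only [Finset.coe_range, Set.mem_Iio] at hk
      exact hpk k (by omega)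
    rw [himc, show L + 1 = h from by omega, hline_eq]
  · rintro rfl
    refine ⟨h - 1, fun k => (1 + k, a), rfl, ?_, fun k _ => Or.inl rfl, ?_⟩
    · show ((1 : ℕ) + (h - 1), a) = (h, a)
      rw [Prod.mk.injEq]; exact ⟨by omega, rfl⟩
    · rw [show h - 1 + 1 = h from by omega, hline_eq]

def pathOf (h x a : ℕ) : Finset (ℕ × ℕ) :=
  (Icc 1 x).image (·, a) ∪ (Icc x h).image (·, a + 1)

lemma mem_pathOf {h x a c ρ : ℕ} :
    (c, ρ) ∈ pathOf h x a ↔ (ρ = a ∧ 1 ≤ c ∧ c ≤ x) ∨ (ρ = a + 1 ∧ x ≤ c ∧ c ≤ h) := by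
  simp only [pathOf, mem_union, mem_image, mem_Icc, Prod.mk.injEq]
  constructor
  · rintro (⟨b, hb, rfl, rfl⟩ | ⟨b, hb, rfl, rfl⟩) <;> omega
  · rintro (⟨rfl, hc⟩ | ⟨rfl, hc⟩)
    · exact Or.inl ⟨c, hc, rfl, rfl⟩
    · exact Or.inr ⟨c, hc, rfl, rfl⟩

lemma image_step (h x a : ℕ) (hx1 : 1 ≤ x) (hx2 : x ≤ h) :
    (range (h + 1)).image (fun k => if k < x then (1 + k, a) else (k, a + 1)) = pathOf h x a := by
  ext ⟨c, ρ⟩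
  constructor
  · intro hq
    simp only [mem_image, mem_range] at hq
    obtain ⟨k, hk, hke⟩ := hq
    rw [mem_pathOf]
    by_cases h1 : k < x
    · rw [if_pos h1, Prod.mk.injEq] at hke; left; omega
    · rw [if_neg h1, Prod.mk.injEq] at hke; right; omega
  · intro hq
    rw [mem_pathOf] at hq
    simp only [mem_image, mem_range]
    rcases hq with ⟨rfl, hc⟩ | ⟨rfl, hc⟩
    · refine ⟨c - 1, by omega, ?_⟩
      rw [if_pos (show c - 1 < x by omega), Prod.mk.injEq]
      exact ⟨by omega, rfl⟩
    · exact ⟨c, by omega, by rw [if_neg (show ¬ c < x by omega)]⟩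

/-- The single-up-step path. -/
lemma isUpRightPath_succ_iff {h a : ℕ} (hh : 1 ≤ h) {S : Finset (ℕ × ℕ)} :
    IsUpRightPath h a (a + 1) S ↔ ∃ x, 1 ≤ x ∧ x ≤ h ∧ S = pathOf h x a := by
  constructor
  · rintro ⟨L, p, h0, hL, hstep, rfl⟩
    have hsum := walk_sum h0 hstep
    have hmono := walk_snd_mono hstep
    have hQ : ∃ k, k ≤ L ∧ a + 1 ≤ (p k).2 := ⟨L, le_rfl, by rw [hL]⟩
    classical
    set k0 := Nat.find hQ with hk0def
    obtain ⟨hk0L, hk0⟩ := Nat.find_spec hQ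
    rw [← hk0def] at hk0 hk0L
    have hk0pos : 1 ≤ k0 := by
      rcases Nat.eq_zero_or_pos k0 with hz | hp
      · exfalso; rw [hz] at hk0; rw [h0] at hk0; simp at hk0
      · exact hp
    have hupper : ∀ k, k ≤ L → (p k).2 ≤ a + 1 := by
      intro k hk
      have := hmono k L hk le_rfl; rw [hL] at this; exact this
    have hbefore : ∀ k, k < k0 → p k = (1 + k, a) := by
      intro k hk
      have hkL : k ≤ L := le_trans (le_of_lt hk) hk0L
      have h2 : ¬ (k ≤ L ∧ a + 1 ≤ (p k).2) := Nat.find_min hQ hk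
      have h3 : a ≤ (p k).2 := by
        have := hmono 0 k (Nat.zero_le _) hkL; rw [h0] at this; exact this
      have h4 := hsum k hkL
      rw [Prod.ext_iff]; constructor <;> simp <;> omega
    have hafter : ∀ k, k0 ≤ k → k ≤ L → p k = (k, a + 1) := by
      intro k hk1 hk2
      have h3 : a + 1 ≤ (p k).2 := le_trans hk0 (hmono k0 k hk1 hk2)
      have h4 := hupper k hk2
      have h5 := hsum k hk2
      rw [Prod.ext_iff]; constructor <;> simp <;> omega
    have hLh : L = h := by
      have := hafter L hk0L le_rfl; rw [hL, Prod.ext_iff] at this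
      simpa using this.1.symm
    refine ⟨k0, hk0pos, by omega, ?_⟩
    have himc : (range (L + 1)).image p
        = (range (L + 1)).image (fun k => if k < k0 then (1 + k, a) else (k, a + 1)) := by
      apply Finset.image_congr
      intro k hk
      simp only [Finset.coe_range, Set.mem_Iio] at hk
      dsimp only
      by_cases h1 : k < k0
      · rw [if_pos h1]; exact hbefore k h1
      · rw [if_neg h1]; exact hafter k (by omega) (by omega)
    rw [himc, show L + 1 = h + 1 from by omega, image_step h k0 a hk0pos (by omega)]
  · rintro ⟨x, hx1, hx2, rfl⟩
    refine ⟨h, fun k => if k < x then (1 + k, a) else (k, a + 1), ?_, ?_, ?_,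
      (image_step h x a hx1 hx2).symm⟩
    · show (if 0 < x then ((1 : ℕ) + 0, a) else ((0 : ℕ), a + 1)) = (1, a)
      rw [if_pos (by omega)]
    · show (if h < x then ((1 : ℕ) + h, a) else (h, a + 1)) = (h, a + 1)
      rw [if_neg (by omega)]
    · intro k hk
      dsimp only
      split_ifs with h1 h2 h2
      · left; rw [Prod.mk.injEq]; exact ⟨by omega, rfl⟩
      · exfalso; omega
      · right; rw [Prod.mk.injEq]; exact ⟨by omega, rfl⟩
      · left; rw [Prod.mk.injEq]; exact ⟨by omega, rfl⟩




/-- number of indices with value `< d` in `Fin m`. -/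
lemma card_filter_val_lt (m d : ℕ) (hd : d ≤ m) :
    (univ.filter fun i : Fin m => i.1 < d).card = d := by
  rw [← Finset.card_range d]
  apply Finset.card_nbij (i := Fin.val)
  · intro a ha; simp at ha ⊢; exact ha
  · exact Fin.val_injective.injOn
  · intro b hb
    simp only [Finset.coe_range, Set.mem_Iio] at hb
    exact ⟨⟨b, by omega⟩, by simp [hb], rfl⟩

def Nj {m : ℕ} (j : Fin m → ℕ) (s : ℕ) : ℕ := (univ.filter fun k => j k ≤ s).card

lemma Nj_le {m : ℕ} (j : Fin m → ℕ) (s : ℕ) : Nj j s ≤ m := by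
  classical
  calc (univ.filter fun k => j k ≤ s).card ≤ univ.card := Finset.card_filter_le _ _
  _ = m := by simp

lemma Nj_mono {m : ℕ} (j : Fin m → ℕ) {s s' : ℕ} (hss : s ≤ s') : Nj j s ≤ Nj j s' := by
  classical
  apply Finset.card_le_card
  intro k hk; simp at hk ⊢; omega

/-- down-closed counting: for monotone `j`, `j κ ≤ s ↔ κ < N(s)`. -/
lemma monotone_le_iff {m : ℕ} {j : Fin m → ℕ} (hm : Monotone j) (κ : Fin m) (s : ℕ) :
    j κ ≤ s ↔ κ.1 < Nj j s := by
  classical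
  constructor
  · intro hjs
    have hsub : (univ.filter fun i : Fin m => i.1 < κ.1 + 1) ⊆ (univ.filter fun k => j k ≤ s) := by
      intro i hi
      simp only [mem_filter, mem_univ, true_and] at hi ⊢
      exact le_trans (hm (show i ≤ κ by exact Fin.le_def.mpr (by omega))) hjs
    have := Finset.card_le_card hsub
    rw [card_filter_val_lt m (κ.1 + 1) (by omega)] at this
    unfold Nj; omega
  · intro hlt
    by_contra hjs
    have hsub : (univ.filter fun k => j k ≤ s) ⊆ (univ.filter fun i : Fin m => i.1 < κ.1) := by
      intro i hi
      simp only [mem_filter, mem_univ, true_and] at hi ⊢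
      by_contra hik
      exact hjs (le_trans (hm (show κ ≤ i from Fin.le_def.mpr (by omega))) hi)
    have := Finset.card_le_card hsub
    rw [card_filter_val_lt m κ.1 (by omega)] at this
    unfold Nj at hlt; omega

def xseq (n : ℕ) {m : ℕ} (j : Fin m → ℕ) (r : ℕ) : ℕ := Nj j (n - r) + (n - r)

lemma gap_lemma {f : ℕ → ℕ} {n : ℕ} (hf : ∀ r, r + 1 ≤ n → f (r + 1) < f r) :
    ∀ a b, a ≤ b → b ≤ n → f b + (b - a) ≤ f a := by
  intro a b hab
  induction b with
  | zero =>
    intro _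
    obtain rfl : a = 0 := Nat.le_zero.mp hab
    omega
  | succ b ih =>
    intro hbn
    rcases Nat.eq_or_lt_of_le hab with he | hl
    · subst he; omega
    · have h1 := hf b hbn
      have h2 := ih (by omega) (by omega)
      omega

lemma xseq_adj {n m : ℕ} {j : Fin m → ℕ} : ∀ r, r + 1 ≤ n → xseq n j (r + 1) < xseq n j r := by
  intro r hr
  have h1 : Nj j (n - (r + 1)) ≤ Nj j (n - r) := Nj_mono j (by omega)
  unfold xseq
  omega

lemma xseq_gap {n m : ℕ} {j : Fin m → ℕ} {a b : ℕ} (hab : a ≤ b) (hbn : b ≤ n) :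
    xseq n j b + (b - a) ≤ xseq n j a :=
  gap_lemma (fun r hr => xseq_adj r hr) a b hab hbn

lemma xseq_zero {n m : ℕ} {j : Fin m → ℕ} (hjn : ∀ k, j k ≤ n) : xseq n j 0 = m + n := by
  unfold xseq Nj
  have : (univ.filter fun k => j k ≤ n - 0) = univ := by
    apply Finset.filter_true_of_mem; intro k _; simpa using hjn k
  rw [this]; simp

lemma xseq_n {n m : ℕ} {j : Fin m → ℕ} (hj1 : ∀ k, 1 ≤ j k) : xseq n j n = 0 := by
  unfold xseq Nj
  have : (univ.filter fun k => j k ≤ n - n) = ∅ := by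
    apply Finset.filter_false_of_mem; intro k _; have := hj1 k; omega
  rw [this]; simp

lemma xseq_ge {n m : ℕ} {j : Fin m → ℕ} (r : ℕ) : n - r ≤ xseq n j r := by
  unfold xseq; omega

def cell (n : ℕ) {m : ℕ} (j : Fin m → ℕ) (k : Fin m) : ℕ × ℕ :=
  (k.1 + 1 + j k - 1, n - j k + 1)

lemma mem_cellSet {n m : ℕ} {j : Fin m → ℕ} (hm : Monotone j) (hj1 : ∀ k, 1 ≤ j k)
    (hjn : ∀ k, j k ≤ n) (c ρ : ℕ) :
    (c, ρ) ∈ univ.image (cell n j) ↔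
      1 ≤ ρ ∧ ρ ≤ n ∧ xseq n j ρ < c ∧ c < xseq n j (ρ - 1) := by
  classical
  simp only [mem_image, mem_univ, true_and]
  constructor
  · rintro ⟨κ, hκ⟩
    have h1 := hj1 κ
    have h2 := hjn κ
    have hfst : c = κ.1 + j κ := by
      have := congrArg Prod.fst hκ; simp [cell] at this; omega
    have hsnd : ρ = n - j κ + 1 := by
      have := congrArg Prod.snd hκ; simp [cell] at this; omega
    have e1 : n - ρ = j κ - 1 := by omega
    have e2 : n - (ρ - 1) = j κ := by omega
    have hx1 : xseq n j ρ = Nj j (j κ - 1) + (j κ - 1) := by unfold xseq; rw [e1]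
    have hx2 : xseq n j (ρ - 1) = Nj j (j κ) + j κ := by unfold xseq; rw [e2]
    have hN1 : Nj j (j κ - 1) ≤ κ.1 := by
      by_contra hc
      have := (monotone_le_iff hm κ (j κ - 1)).mpr (by omega)
      omega
    have hN2 : κ.1 < Nj j (j κ) := (monotone_le_iff hm κ (j κ)).mp le_rfl
    omega
  · rintro ⟨hρ1, hρn, hlo, hhi⟩
    set s := n - ρ + 1 with hs
    have hs1 : 1 ≤ s := by omega
    have hsn : s ≤ n := by omega
    have e1 : n - (ρ - 1) = s := by omega
    have e2 : n - ρ = s - 1 := by omega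
    have hx2 : xseq n j (ρ - 1) = Nj j s + s := by unfold xseq; rw [e1]
    have hx1 : xseq n j ρ = Nj j (s - 1) + (s - 1) := by unfold xseq; rw [e2]
    have hcs : s ≤ c := by
      have := xseq_ge (n := n) (j := j) ρ; omega
    have hκm : c - s < m := by
      have := Nj_le j s; omega
    refine ⟨⟨c - s, hκm⟩, ?_⟩
    have hjs : j ⟨c - s, hκm⟩ = s := by
      have hle : j ⟨c - s, hκm⟩ ≤ s := by
        apply (monotone_le_iff hm _ s).mpr
        show c - s < Nj j s
        omega
      have hge : ¬ j ⟨c - s, hκm⟩ ≤ s - 1 := by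
        intro hcon
        have h9 : c - s < Nj j (s - 1) := (monotone_le_iff hm ⟨c - s, hκm⟩ (s - 1)).mp hcon
        omega
      omega
    rw [cell, hjs, Prod.mk.injEq]
    exact ⟨by show c - s + 1 + s - 1 = c; omega, by omega⟩


lemma Nj_zero {m : ℕ} {j : Fin m → ℕ} (hj1 : ∀ k, 1 ≤ j k) : Nj j 0 = 0 := by
  unfold Nj
  rw [Finset.filter_false_of_mem, Finset.card_empty]
  intro k _; have := hj1 k; omega

lemma Nj_top {m : ℕ} {j : Fin m → ℕ} {s : ℕ} (hjn : ∀ k, j k ≤ n) (hs : n ≤ s) : Nj j s = m := by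
  unfold Nj
  rw [Finset.filter_true_of_mem]
  · simp
  · intro k _; have := hjn k; omega

def tupleOf (h n : ℕ) {m : ℕ} (j : Fin m → ℕ) : Fin (n - 1) → Finset (ℕ × ℕ) :=
  fun i => pathOf h (xseq n j (i.1 + 1)) (i.1 + 1)

lemma mem_Phi {m n : ℕ} {j : Fin m → ℕ} :
    j ∈ Phi m n ↔ Monotone j ∧ ∀ k, 1 ≤ j k ∧ j k ≤ n := by
  simp only [Phi, Finset.mem_filter, Fintype.mem_piFinset, mem_Icc]
  constructor
  · rintro ⟨h1, h2⟩; exact ⟨h2, h1⟩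
  · rintro ⟨h1, h2⟩; exact ⟨h2, h1⟩

lemma mem_U {h n m : ℕ} {j : Fin m → ℕ} (c ρ : ℕ) :
    (c, ρ) ∈ univ.biUnion (tupleOf h n j) ↔
      (1 ≤ ρ ∧ ρ + 1 ≤ n ∧ 1 ≤ c ∧ c ≤ xseq n j ρ) ∨
      (2 ≤ ρ ∧ ρ ≤ n ∧ xseq n j (ρ - 1) ≤ c ∧ c ≤ h) := by
  simp only [mem_biUnion, mem_univ, true_and, tupleOf]
  constructor
  · rintro ⟨i, hmem⟩
    rw [mem_pathOf] at hmem
    have hi := i.2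
    rcases hmem with ⟨hρ, hc1, hc2⟩ | ⟨hρ, hc1, hc2⟩
    · left
      refine ⟨by omega, by omega, hc1, ?_⟩
      rw [show ρ = i.1 + 1 from hρ]; exact hc2
    · right
      refine ⟨by omega, by omega, ?_, hc2⟩
      have e : ρ - 1 = i.1 + 1 := by omega
      rw [e]; exact hc1
  · rintro (⟨h1, h2, h3, h4⟩ | ⟨h1, h2, h3, h4⟩)
    · refine ⟨⟨ρ - 1, by omega⟩, ?_⟩
      rw [mem_pathOf]
      left
      refine ⟨by show ρ = ρ - 1 + 1; omega, h3, ?_⟩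
      show c ≤ xseq n j (ρ - 1 + 1)
      rw [show ρ - 1 + 1 = ρ from by omega]; exact h4
    · refine ⟨⟨ρ - 2, by omega⟩, ?_⟩
      rw [mem_pathOf]
      right
      refine ⟨by show ρ = ρ - 2 + 1 + 1; omega, ?_, h4⟩
      show xseq n j (ρ - 2 + 1) ≤ c
      rw [show ρ - 2 + 1 = ρ - 1 from by omega]; exact h3

lemma grid_facts {h n m : ℕ} {j : Fin m → ℕ} (hn : 1 ≤ n) (hm : h + 1 = m + n)
    (hmj : Monotone j) (hj1 : ∀ k, 1 ≤ j k) (hjn : ∀ k, j k ≤ n) (ρ : ℕ) :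
    (ρ = n → xseq n j ρ = 0) ∧ (ρ = 1 → xseq n j (ρ - 1) = m + n) ∧
    (1 ≤ ρ → ρ ≤ n → xseq n j ρ < xseq n j (ρ - 1)) ∧
    (ρ ≤ n → xseq n j ρ + ρ ≤ m + n) ∧ (ρ - 1 ≤ n → xseq n j (ρ - 1) + (ρ - 1) ≤ m + n) := by
  refine ⟨?_, ?_, ?_, ?_, ?_⟩
  · rintro rfl; exact xseq_n hj1
  · rintro rfl; exact xseq_zero hjn
  · intro h1 h2
    have := xseq_adj (n := n) (j := j) (ρ - 1) (by omega)
    rwa [show ρ - 1 + 1 = ρ from by omega] at this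
  · intro h1
    have := xseq_gap (n := n) (j := j) (Nat.zero_le ρ) h1
    rw [xseq_zero hjn] at this; omega
  · intro h1
    have := xseq_gap (n := n) (j := j) (Nat.zero_le (ρ - 1)) h1
    rw [xseq_zero hjn] at this; omega

lemma grid_eq {h n m : ℕ} {j : Fin m → ℕ} (hn : 1 ≤ n) (hm : h + 1 = m + n)
    (hmj : Monotone j) (hj1 : ∀ k, 1 ≤ j k) (hjn : ∀ k, j k ≤ n) :
    Icc 1 h ×ˢ Icc 1 n = univ.biUnion (tupleOf h n j) ∪ univ.image (cell n j) := by
  ext ⟨c, ρ⟩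
  rw [Finset.mem_union, mem_U, mem_cellSet hmj hj1 hjn, Finset.mem_product, mem_Icc, mem_Icc]
  obtain ⟨f1, f2, f3, f4, f5⟩ := grid_facts (j := j) hn hm hmj hj1 hjn ρ
  omega

lemma disj_UC {h n m : ℕ} {j : Fin m → ℕ} (hn : 1 ≤ n) (hm : h + 1 = m + n)
    (hmj : Monotone j) (hj1 : ∀ k, 1 ≤ j k) (hjn : ∀ k, j k ≤ n) :
    Disjoint (univ.biUnion (tupleOf h n j)) (univ.image (cell n j)) := by
  rw [Finset.disjoint_left]
  rintro ⟨c, ρ⟩ hU hC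
  rw [mem_U] at hU
  rw [mem_cellSet hmj hj1 hjn] at hC
  omega

lemma tupleOf_mem {h n m : ℕ} {j : Fin m → ℕ} (hn : 1 ≤ n) (hnh : n ≤ h) (hm : h + 1 = m + n)
    (hmj : Monotone j) (hj1 : ∀ k, 1 ≤ j k) (hjn : ∀ k, j k ≤ n) :
    tupleOf h n j ∈ PiTuples h n (n - 1) n := by
  have hx_bounds : ∀ r, 1 ≤ r → r ≤ n - 1 → 1 ≤ xseq n j r ∧ xseq n j r ≤ h := by
    intro r h1 h2
    constructor
    · have := xseq_ge (n := n) (j := j) r; omega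
    · have := xseq_gap (n := n) (j := j) (Nat.zero_le r) (by omega)
      rw [xseq_zero hjn] at this; omega
  simp only [PiTuples, Finset.mem_filter]
  refine ⟨?_, ?_, ?_⟩
  · rw [Fintype.mem_piFinset]
    intro i
    rw [Finset.mem_powerset]
    rintro ⟨c, ρ⟩ hq
    rw [tupleOf, mem_pathOf] at hq
    have hi := i.2
    obtain ⟨hb1, hb2⟩ := hx_bounds (i.1 + 1) (by omega) (by omega)
    rw [Finset.mem_product, mem_Icc, mem_Icc]
    omega
  · intro i
    rw [show n - (n - 1) + (i.1 + 1) = (i.1 + 1) + 1 from by omega]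
    rw [isUpRightPath_succ_iff (show 1 ≤ h by omega)]
    have hi := i.2
    obtain ⟨hb1, hb2⟩ := hx_bounds (i.1 + 1) (by omega) (by omega)
    exact ⟨xseq n j (i.1 + 1), hb1, hb2, rfl⟩
  · have key : ∀ i i' : Fin (n - 1), i.1 < i'.1 →
        Disjoint (tupleOf h n j i) (tupleOf h n j i') := by
      intro i i' hlt
      rw [Finset.disjoint_left]
      rintro ⟨c, ρ⟩ hq hq'
      rw [tupleOf, mem_pathOf] at hq hq'
      have hi' := i'.2
      have hgap : xseq n j (i'.1 + 1) < xseq n j (i.1 + 1) := by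
        have := xseq_gap (n := n) (j := j) (show i.1 + 1 ≤ i'.1 + 1 by omega)
          (show i'.1 + 1 ≤ n by omega)
        omega
      omega
    intro i i' hne
    have hv : i.1 ≠ i'.1 := fun hc => hne (Fin.ext hc)
    rcases Nat.lt_or_ge i.1 i'.1 with hl | hg
    · exact key i i' hl
    · exact (key i' i (by omega)).symm

lemma tupleOf_inj {h n m : ℕ} {j j' : Fin m → ℕ} (hn : 1 ≤ n) (hm : h + 1 = m + n)
    (hmj : Monotone j) (hj1 : ∀ k, 1 ≤ j k) (hjn : ∀ k, j k ≤ n)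
    (hmj' : Monotone j') (hj1' : ∀ k, 1 ≤ j' k) (hjn' : ∀ k, j' k ≤ n)
    (heq : tupleOf h n j = tupleOf h n j') : j = j' := by
  have hx : ∀ r, 1 ≤ r → r ≤ n - 1 → xseq n j r = xseq n j' r := by
    intro r h1 h2
    have hc := congrFun heq ⟨r - 1, by omega⟩
    rw [tupleOf, tupleOf] at hc
    have hc' : pathOf h (xseq n j (r - 1 + 1)) (r - 1 + 1)
        = pathOf h (xseq n j' (r - 1 + 1)) (r - 1 + 1) := hc
    rw [show r - 1 + 1 = r from by omega] at hc'
    have hge1 : 1 ≤ xseq n j r := by have := xseq_ge (n := n) (j := j) r; omega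
    have hge1' : 1 ≤ xseq n j' r := by have := xseq_ge (n := n) (j := j') r; omega
    have hle : xseq n j r ≤ xseq n j' r := by
      have hmem : (xseq n j r, r) ∈ pathOf h (xseq n j r) r :=
        mem_pathOf.mpr (Or.inl ⟨rfl, hge1, le_rfl⟩)
      rw [hc', mem_pathOf] at hmem
      omega
    have hge : xseq n j' r ≤ xseq n j r := by
      have hmem : (xseq n j' r, r) ∈ pathOf h (xseq n j' r) r :=
        mem_pathOf.mpr (Or.inl ⟨rfl, hge1', le_rfl⟩)
      rw [← hc', mem_pathOf] at hmem
      omega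
    omega
  have hN : ∀ s, Nj j s = Nj j' s := by
    intro s
    rcases Nat.eq_zero_or_pos s with rfl | hs1
    · rw [Nj_zero hj1, Nj_zero hj1']
    rcases Nat.lt_or_ge s n with hsn | hsn
    · have := hx (n - s) (by omega) (by omega)
      unfold xseq at this
      rw [show n - (n - s) = s from by omega] at this
      omega
    · rw [Nj_top hjn hsn, Nj_top hjn' hsn]
  funext κ
  have h1 : j κ ≤ j' κ := by
    apply (monotone_le_iff hmj κ (j' κ)).mpr
    rw [hN]
    exact (monotone_le_iff hmj' κ (j' κ)).mp le_rfl
  have h2 : j' κ ≤ j κ := by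
    apply (monotone_le_iff hmj' κ (j κ)).mpr
    rw [← hN]
    exact (monotone_le_iff hmj κ (j κ)).mp le_rfl
  omega

lemma tupleOf_surj {h n m : ℕ} (hn : 1 ≤ n) (hnh : n ≤ h) (hm : h + 1 = m + n)
    (π : Fin (n - 1) → Finset (ℕ × ℕ)) (hπ : π ∈ PiTuples h n (n - 1) n) :
    ∃ j : Fin m → ℕ, Monotone j ∧ (∀ k, 1 ≤ j k ∧ j k ≤ n) ∧ tupleOf h n j = π := by
  classical
  simp only [PiTuples, Finset.mem_filter] at hπ
  obtain ⟨-, hpaths, hdisj⟩ := hπ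
  have hex : ∀ i : Fin (n - 1), ∃ x, 1 ≤ x ∧ x ≤ h ∧ π i = pathOf h x (i.1 + 1) := by
    intro i
    have hp := hpaths i
    rw [show n - (n - 1) + (i.1 + 1) = (i.1 + 1) + 1 from by omega] at hp
    exact (isUpRightPath_succ_iff (show 1 ≤ h by omega)).mp hp
  choose x hx1 hx2 hx3 using hex
  have hadj : ∀ i : Fin (n - 1), ∀ hi : i.1 + 1 < n - 1, x ⟨i.1 + 1, hi⟩ < x i := by
    intro i hi
    by_contra hcon
    have hd : Disjoint (π i) (π ⟨i.1 + 1, hi⟩) := hdisj (show i ≠ ⟨i.1 + 1, hi⟩ from fun hc => by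
      have := congrArg Fin.val hc; simp at this)
    rw [Finset.disjoint_left] at hd
    have hm1 : (x i, i.1 + 2) ∈ π i := by
      rw [hx3, mem_pathOf]; right; exact ⟨rfl, le_rfl, hx2 i⟩
    have hm2 : (x i, i.1 + 2) ∈ π ⟨i.1 + 1, hi⟩ := by
      rw [hx3, mem_pathOf]; left
      exact ⟨by show i.1 + 2 = i.1 + 1 + 1; omega, hx1 i, by omega⟩
    exact hd hm1 hm2
  set X : ℕ → ℕ := fun r => if hr : 1 ≤ r ∧ r ≤ n - 1 then x ⟨r - 1, by omega⟩
    else if r = 0 then m + n else 0 with hXdef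
  have hX0 : X 0 = m + n := by simp [hXdef]
  have hXr : ∀ r (hr : r < n - 1), X (r + 1) = x ⟨r, hr⟩ := by
    intro r hr
    have hc : 1 ≤ r + 1 ∧ r + 1 ≤ n - 1 := by omega
    show (if hr' : 1 ≤ r + 1 ∧ r + 1 ≤ n - 1 then x ⟨r + 1 - 1, by omega⟩
      else if r + 1 = 0 then m + n else 0) = x ⟨r, hr⟩
    rw [dif_pos hc]
    congr 1
  have hXr' : ∀ r, 1 ≤ r → ∀ hr : r - 1 < n - 1, X r = x ⟨r - 1, hr⟩ := by
    intro r h1 hr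
    have := hXr (r - 1) hr
    rwa [show r - 1 + 1 = r from by omega] at this
  have hXn : X n = 0 := by
    have hc : ¬ (1 ≤ n ∧ n ≤ n - 1) := by omega
    simp [hXdef, hc, show n ≠ 0 by omega]
  have hxb : ∀ i : Fin (n - 1), 1 ≤ x i ∧ x i ≤ h := fun i => ⟨hx1 i, hx2 i⟩
  have hXadj : ∀ r, r + 1 ≤ n → X (r + 1) < X r := by
    intro r hr
    rcases Nat.eq_zero_or_pos r with rfl | hr1
    · rcases Nat.lt_or_ge 1 n with h2 | h2
      · have p0 : (0 : ℕ) < n - 1 := by omega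
        have hv := hXr 0 p0
        have hb := hxb ⟨0, p0⟩
        have h00 := hX0
        omega
      · have e1 : n = 1 := by omega
        subst e1
        have hv : X (0 + 1) = X 1 := rfl
        have h00 := hX0
        have h11 := hXn
        omega
    · rcases Nat.lt_or_ge (r + 1) n with h2 | h2
      · have p1 : r < n - 1 := by omega
        have hv1 := hXr r p1
        have pr : r - 1 < n - 1 := by omega
        have hv2 := hXr' r (by omega) pr
        have p3 : (⟨r - 1, pr⟩ : Fin (n - 1)).1 + 1 < n - 1 := by
          show r - 1 + 1 < n - 1; omega
        have hlt := hadj ⟨r - 1, pr⟩ p3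
        have e : (⟨(⟨r - 1, pr⟩ : Fin (n - 1)).1 + 1, p3⟩ : Fin (n - 1)) = ⟨r, p1⟩ := by
          apply Fin.ext
          show r - 1 + 1 = r
          omega
        rw [e] at hlt
        omega
      · have e2 : r + 1 = n := by omega
        have pr : r - 1 < n - 1 := by omega
        have hv := hXr' r (by omega) pr
        have hb := hxb ⟨r - 1, pr⟩
        have hn2 := hXn
        rw [e2]
        omega
  have hXgap := gap_lemma hXadj
  set _j : Fin m → ℕ := fun κ => 1 + ((Icc 1 n).filter fun s => X (n - s) ≤ s + κ.1).card
    with hjdef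
  have hdc : ∀ (κv : ℕ) s s', 1 ≤ s → s ≤ s' → s' ≤ n →
      X (n - s') ≤ s' + κv → X (n - s) ≤ s + κv := by
    intro κv s s' h1 h2 h3 hP
    have := hXgap (n - s') (n - s) (by omega) (by omega)
    omega
  have hcard : ∀ (κv : ℕ) s, 1 ≤ s → s ≤ n →
      ((((Icc 1 n).filter fun s' => X (n - s') ≤ s' + κv).card ≤ s - 1) ↔
        ¬ X (n - s) ≤ s + κv) := by
    intro κv s h1 h2
    constructor
    · intro hle hP
      have hsub : Icc 1 s ⊆ (Icc 1 n).filter fun s' => X (n - s') ≤ s' + κv := by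
        intro s' hs'
        rw [mem_Icc] at hs'
        rw [mem_filter, mem_Icc]
        exact ⟨⟨hs'.1, by omega⟩, hdc κv s' s hs'.1 hs'.2 h2 hP⟩
      have hc := Finset.card_le_card hsub
      rw [Nat.card_Icc] at hc
      omega
    · intro hP
      have hsub : ((Icc 1 n).filter fun s' => X (n - s') ≤ s' + κv) ⊆ Icc 1 (s - 1) := by
        intro s' hs'
        rw [mem_filter, mem_Icc] at hs'
        rw [mem_Icc]
        obtain ⟨⟨ha, hb⟩, hPs'⟩ := hs'
        refine ⟨ha, ?_⟩
        by_contra hcon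
        exact hP (hdc κv s s' h1 (by omega) hb hPs')
      have hc := Finset.card_le_card hsub
      rw [Nat.card_Icc] at hc
      omega
  have hjle : ∀ (κ : Fin m) s, 1 ≤ s → s ≤ n → (_j κ ≤ s ↔ s + κ.1 < X (n - s)) := by
    intro κ s h1 h2
    have hdefκ : _j κ = 1 + ((Icc 1 n).filter fun s' => X (n - s') ≤ s' + κ.1).card := rfl
    have hc := hcard κ.1 s h1 h2
    omega
  have hj1 : ∀ κ, 1 ≤ _j κ := by
    intro κ
    have hdefκ : _j κ = 1 + ((Icc 1 n).filter fun s' => X (n - s') ≤ s' + κ.1).card := rfl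
    omega
  have hjn : ∀ κ : Fin m, _j κ ≤ n := by
    intro κ
    apply (hjle κ n (by omega) le_rfl).mpr
    rw [Nat.sub_self, hX0]
    have := κ.2
    omega
  have hmono : Monotone _j := by
    intro κ κ' hκ
    have hdefκ : _j κ = 1 + ((Icc 1 n).filter fun s' => X (n - s') ≤ s' + κ.1).card := rfl
    have hdefκ' : _j κ' = 1 + ((Icc 1 n).filter fun s' => X (n - s') ≤ s' + κ'.1).card := rfl
    have hvv : κ.1 ≤ κ'.1 := hκ
    have hcc : ((Icc 1 n).filter fun s' => X (n - s') ≤ s' + κ.1).card ≤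
        ((Icc 1 n).filter fun s' => X (n - s') ≤ s' + κ'.1).card := by
      apply Finset.card_le_card
      intro s hs
      rw [mem_filter] at hs ⊢
      exact ⟨hs.1, by have := hs.2; omega⟩
    omega
  refine ⟨_j, hmono, fun κ => ⟨hj1 κ, hjn κ⟩, ?_⟩
  have hNX : ∀ s, 1 ≤ s → s ≤ n - 1 → Nj _j s + s = X (n - s) := by
    intro s h1 h2
    have hTub : X (n - s) ≤ m + s := by
      have := hXgap 0 (n - s) (by omega) (by omega)
      rw [hX0] at this
      omega
    have hTlb : s ≤ X (n - s) := by
      have := hXgap (n - s) n (by omega) le_rfl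
      rw [hXn] at this
      omega
    have hfeq : (univ.filter fun κ : Fin m => _j κ ≤ s)
        = (univ.filter fun κ : Fin m => κ.1 < X (n - s) - s) := by
      apply Finset.filter_congr
      intro κ _
      rw [hjle κ s h1 (by omega)]
      constructor <;> intro <;> omega
    unfold Nj
    rw [hfeq, card_filter_val_lt m _ (by omega)]
    omega
  funext i
  have hi2 := i.2
  have hxe : xseq n _j (i.1 + 1) = x i := by
    have hs1 : 1 ≤ n - (i.1 + 1) := by omega
    have hs2 : n - (i.1 + 1) ≤ n - 1 := by omega
    have hN := hNX (n - (i.1 + 1)) hs1 hs2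
    rw [show n - (n - (i.1 + 1)) = i.1 + 1 from by omega] at hN
    rw [hXr i.1 i.2] at hN
    show Nj _j (n - (i.1 + 1)) + (n - (i.1 + 1)) = x i
    rw [hN]
  show pathOf h (xseq n _j (i.1 + 1)) (i.1 + 1) = π i
  rw [hxe]
  exact (hx3 i).symm

lemma piTuples_n_eq {h n : ℕ} (hn : 1 ≤ n) (hnh : n ≤ h) :
    PiTuples h n n n = {fun i : Fin n => (Icc 1 h).image (·, i.1 + 1)} := by
  ext π
  rw [Finset.mem_singleton]
  simp only [PiTuples, Finset.mem_filter]
  constructor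
  · rintro ⟨-, hpath, -⟩
    funext i
    have hp := hpath i
    rw [show n - n + (i.1 + 1) = i.1 + 1 from by omega] at hp
    exact (isUpRightPath_self_iff (by omega)).mp hp
  · rintro rfl
    refine ⟨?_, ?_, ?_⟩
    · rw [Fintype.mem_piFinset]
      intro i
      rw [Finset.mem_powerset]
      rintro ⟨c, ρ⟩ hq
      simp only [mem_image, mem_Icc, Prod.mk.injEq] at hq
      obtain ⟨b, hb, rfl, rfl⟩ := hq
      rw [Finset.mem_product, mem_Icc, mem_Icc]
      have := i.2
      omega
    · intro i
      rw [show n - n + (i.1 + 1) = i.1 + 1 from by omega]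
      exact (isUpRightPath_self_iff (by omega)).mpr rfl
    · intro i i' hne
      rw [Finset.disjoint_left]
      rintro ⟨c, ρ⟩ hq hq'
      simp only [mem_image, mem_Icc, Prod.mk.injEq] at hq hq'
      obtain ⟨b, hb, rfl, rfl⟩ := hq
      obtain ⟨b', hb', h1, h2⟩ := hq'
      exact hne (Fin.ext (by omega))

lemma biUnion_hlines {h n : ℕ} :
    univ.biUnion (fun i : Fin n => (Icc 1 h).image (·, i.1 + 1)) = Icc 1 h ×ˢ Icc 1 n := by
  ext ⟨c, ρ⟩
  simp only [mem_biUnion, mem_univ, true_and, mem_image, mem_Icc, Prod.mk.injEq,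
    Finset.mem_product]
  constructor
  · rintro ⟨i, b, hb, rfl, rfl⟩
    have := i.2
    omega
  · rintro ⟨h1, h2⟩
    exact ⟨⟨ρ - 1, by omega⟩, c, h1, rfl, by show ρ - 1 + 1 = ρ; omega⟩

lemma cell_injOn {n m : ℕ} {j : Fin m → ℕ} (hj1 : ∀ k, 1 ≤ j k) (hjn : ∀ k, j k ≤ n) :
    ∀ κ κ' : Fin m, cell n j κ = cell n j κ' → κ = κ' := by
  intro κ κ' hc
  have h1 := congrArg Prod.fst hc
  have h2 := congrArg Prod.snd hc
  simp only [cell] at h1 h2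
  have := hj1 κ; have := hjn κ; have := hj1 κ'; have := hjn κ'
  apply Fin.ext
  omega

lemma weight_eq {h n m : ℕ} {j : Fin m → ℕ} (hn : 1 ≤ n) (hm : h + 1 = m + n)
    (hmj : Monotone j) (hj1 : ∀ k, 1 ≤ j k) (hjn : ∀ k, j k ≤ n)
    (w : ℕ × ℕ → ℝ) (hw : ∀ q, 0 < w q) :
    ∏ q ∈ univ.biUnion (tupleOf h n j), w q
      = (∏ q ∈ Icc 1 h ×ˢ Icc 1 n, w q) * ∏ κ : Fin m, (w (cell n j κ))⁻¹ := by
  classical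
  have hgrid := grid_eq (h := h) hn hm hmj hj1 hjn
  have hdisj := disj_UC (h := h) hn hm hmj hj1 hjn
  rw [hgrid, Finset.prod_union hdisj]
  have himg : ∏ κ : Fin m, (w (cell n j κ))⁻¹ = ∏ q ∈ univ.image (cell n j), (w q)⁻¹ := by
    rw [Finset.prod_image (fun κ _ κ' _ hc => cell_injOn hj1 hjn κ κ' hc)]
  rw [himg, Finset.prod_inv_distrib]
  have hpos : (0 : ℝ) < ∏ q ∈ univ.image (cell n j), w q :=
    Finset.prod_pos (fun q _ => hw q)
  rw [mul_assoc, mul_inv_cancel₀ (ne_of_gt hpos), mul_one]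

end GRSK

/-- If `t₁, …, tₙ > 0` satisfy the two geometric RSK relations
`t₁⋯tₙ = Σ_{Π^{(n)}_{h,n}} ∏ w` and `t₂⋯tₙ = Σ_{Π^{(n-1)}_{h,n}} ∏ w`, then
`1/t₁ = Σ_{φ ∈ Φ_{m,n}} ∏_{k=1}^{m} g(k, j_k)` with `g(i,j) = 1 / w(i+j-1, n-j+1)`
and `m = h - n + 1`.  Here `t i` for `i : Fin n` plays the role of `t_{i+1}`. -/
theorem inv_t_one_eq_partition_function
    (h n : ℕ) (hn : 1 ≤ n) (hnh : n ≤ h) (w : ℕ × ℕ → ℝ) (hw : ∀ q, 0 < w q)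
    (t : Fin n → ℝ) (ht : ∀ i, 0 < t i)
    (h1 : ∏ i, t i = ∑ π ∈ PiTuples h n n n, ∏ q ∈ Finset.univ.biUnion π, w q)
    (h2 : ∏ i ∈ Finset.univ.erase (⟨0, hn⟩ : Fin n), t i
            = ∑ π ∈ PiTuples h n (n - 1) n, ∏ q ∈ Finset.univ.biUnion π, w q) :
    (t ⟨0, hn⟩)⁻¹
      = ∑ j ∈ Phi (h - n + 1) n,
          ∏ k : Fin (h - n + 1), (w (k.1 + 1 + j k - 1, n - j k + 1))⁻¹ := by
  classical
  set m := h - n + 1 with hmdef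
  have hm : h + 1 = m + n := by omega
  set Z := ∏ q ∈ Icc 1 h ×ˢ Icc 1 n, w q with hZdef
  have hZpos : 0 < Z := Finset.prod_pos (fun q _ => hw q)
  have hZn : ∏ i, t i = Z := by
    rw [h1, GRSK.piTuples_n_eq hn hnh, Finset.sum_singleton, GRSK.biUnion_hlines]
  have hsum : ∑ π ∈ PiTuples h n (n - 1) n, ∏ q ∈ Finset.univ.biUnion π, w q
      = ∑ j ∈ Phi m n, Z * ∏ κ : Fin m, (w (GRSK.cell n j κ))⁻¹ := by
    symm
    apply Finset.sum_bij (i := fun j _ => GRSK.tupleOf h n j)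
    · intro j hj
      obtain ⟨hmj, hb⟩ := GRSK.mem_Phi.mp hj
      exact GRSK.tupleOf_mem hn hnh hm hmj (fun k => (hb k).1) (fun k => (hb k).2)
    · intro j hj j' hj' heq
      obtain ⟨hmj, hb⟩ := GRSK.mem_Phi.mp hj
      obtain ⟨hmj', hb'⟩ := GRSK.mem_Phi.mp hj'
      exact GRSK.tupleOf_inj hn hm hmj (fun k => (hb k).1) (fun k => (hb k).2)
        hmj' (fun k => (hb' k).1) (fun k => (hb' k).2) heq
    · intro π hπ
      obtain ⟨j, hmj, hb, hje⟩ := GRSK.tupleOf_surj hn hnh hm π hπ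
      exact ⟨j, GRSK.mem_Phi.mpr ⟨hmj, hb⟩, hje⟩
    · intro j hj
      obtain ⟨hmj, hb⟩ := GRSK.mem_Phi.mp hj
      exact (GRSK.weight_eq hn hm hmj (fun k => (hb k).1) (fun k => (hb k).2) w hw).symm
  rw [hsum, ← Finset.mul_sum] at h2
  have ht0 : t ⟨0, hn⟩ * ∏ i ∈ Finset.univ.erase (⟨0, hn⟩ : Fin n), t i = ∏ i, t i :=
    Finset.mul_prod_erase univ t (Finset.mem_univ _)
  rw [h2, hZn] at ht0
  show (t ⟨0, hn⟩)⁻¹ = ∑ j ∈ Phi m n, ∏ κ : Fin m, (w (GRSK.cell n j κ))⁻¹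
  set S := ∑ j ∈ Phi m n, ∏ κ : Fin m, (w (GRSK.cell n j κ))⁻¹ with hSdef
  have hts : t ⟨0, hn⟩ * S = 1 := by
    have hcalc : (t ⟨0, hn⟩ * S) * Z = 1 * Z := by
      rw [one_mul]
      calc (t ⟨0, hn⟩ * S) * Z = t ⟨0, hn⟩ * (Z * S) := by ring
      _ = Z := ht0
    exact mul_right_cancel₀ (ne_of_gt hZpos) hcalc
  have := eq_inv_of_mul_eq_one_left (by rw [mul_comm]; exact hts : S * t ⟨0, hn⟩ = 1)
  exact this.symm
end

section
/- For each n ∈ ℕ let f_n : ℝ → [0,1] be strictly monotone with f_n(x) → 0 as x → +∞ and f_n(x) → 1 as x → −∞, and suppose that for each δ > 0 the sequence (f_n) converges uniformly to the indicator function 1_{(−∞,0]} on the set {x : |x| ≥ δ}. Let (X_n) be real-valued random variables such that for each r ∈ ℝ, lim_{n→∞} E[f_n(X_n − r)] = p(r), where p is a continuous probability distribution function on ℝ. Then for every r ∈ ℝ, lim_{n→∞} P(X_n ≤ r) = p(r); i.e., X_n converges in distribution to a random variable with distribution function p. -/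
open Filter MeasureTheory

/-!
Away from `s`, `x ↦ fₙ(x - s)` is uniformly close to the indicator of `(-∞, s]`. So for `n` large,
`1{X ≤ r}` is squeezed between `fₙ(X - (r - δ)) - η` and `fₙ(X - (r + δ)) + η`; only the bounds
`0 ≤ fₙ ≤ 1` are needed inside the window `|x - r| < δ`. Taking expectations and letting `n → ∞`
traps `P(Xₙ ≤ r)` between `p(r - δ) - η` and `p(r + δ) + η` up to `o(1)`, and continuity of `p`
at `r` closes the gap as `δ, η → 0`.
-/

section Sandwich

variable {g : ℝ → ℝ} {δ η : ℝ}

theorem indicator_Iic_le_add (hg₀ : ∀ x, 0 ≤ g x) (hδ : 0 ≤ δ)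
    (hgδ : ∀ x ∈ {x : ℝ | δ ≤ |x|}, dist ((Set.Iic 0).indicator (fun _ => (1 : ℝ)) x) (g x) < η)
    (r x : ℝ) : (Set.Iic r).indicator 1 x ≤ g (x - (r + δ)) + η := by
  by_cases hx : x ≤ r
  · have hfar : x - (r + δ) ∈ {x : ℝ | δ ≤ |x|} := by
      show δ ≤ |_|
      rw [abs_of_nonpos (by linarith)]
      linarith
    have hclose := hgδ _ hfar
    rw [Set.indicator_of_mem (by simp only [Set.mem_Iic]; linarith), Real.dist_eq] at hclose
    rw [Set.indicator_of_mem (Set.mem_Iic.mpr hx), Pi.one_apply]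
    linarith [(abs_lt.mp hclose).2]
  · have hη : 0 < η := dist_nonneg.trans_lt (hgδ δ (by simp [abs_of_nonneg hδ]))
    rw [Set.indicator_of_notMem (mt Set.mem_Iic.mp hx)]
    linarith [hg₀ (x - (r + δ))]

theorem sub_le_indicator_Iic (hg₁ : ∀ x, g x ≤ 1) (hδ : 0 ≤ δ)
    (hgδ : ∀ x ∈ {x : ℝ | δ ≤ |x|}, dist ((Set.Iic 0).indicator (fun _ => (1 : ℝ)) x) (g x) < η)
    (r x : ℝ) : g (x - (r - δ)) - η ≤ (Set.Iic r).indicator 1 x := by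
  by_cases hx : x ≤ r
  · have hη : 0 < η := dist_nonneg.trans_lt (hgδ δ (by simp [abs_of_nonneg hδ]))
    rw [Set.indicator_of_mem (Set.mem_Iic.mpr hx), Pi.one_apply]
    linarith [hg₁ (x - (r - δ))]
  · have hfar : x - (r - δ) ∈ {x : ℝ | δ ≤ |x|} := by
      show δ ≤ |_|
      rw [abs_of_pos (by linarith)]
      linarith
    have hclose := hgδ _ hfar
    rw [Set.indicator_of_notMem (by simp only [Set.mem_Iic]; linarith), Real.dist_eq] at hclose
    rw [Set.indicator_of_notMem (mt Set.mem_Iic.mp hx)]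
    linarith [(abs_lt.mp hclose).1]

end Sandwich

section Expectation

variable {Ω : Type*} [MeasurableSpace Ω] {μ : Measure Ω}
  {X : Ω → ℝ} {g : ℝ → ℝ} {δ η : ℝ}

theorem integrable_comp_sub_of_mem_Icc [IsFiniteMeasure μ] (hX : Measurable X) (hg : Measurable g)
    (hg_mem : ∀ x, g x ∈ Set.Icc (0 : ℝ) 1) (c : ℝ) :
    Integrable (fun ω => g (X ω - c)) μ :=
  Integrable.of_bound (hg.comp (hX.sub measurable_const)).aestronglyMeasurable 1
    (ae_of_all _ fun ω => by
      rw [Real.norm_eq_abs, abs_le]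
      exact ⟨by linarith [(hg_mem (X ω - c)).1], (hg_mem (X ω - c)).2⟩)

theorem integrable_indicator_Iic_comp [IsFiniteMeasure μ] (hX : Measurable X) (r : ℝ) :
    Integrable (fun ω => (Set.Iic r).indicator (1 : ℝ → ℝ) (X ω)) μ :=
  (integrable_const (1 : ℝ)).indicator (measurableSet_le hX measurable_const)

theorem measureReal_setOf_le_le_integral_add [IsProbabilityMeasure μ]
    (hX : Measurable X) (hg : Measurable g)
    (hg_mem : ∀ x, g x ∈ Set.Icc (0 : ℝ) 1) (hδ : 0 ≤ δ)
    (hgδ : ∀ x ∈ {x : ℝ | δ ≤ |x|}, dist ((Set.Iic 0).indicator (fun _ => (1 : ℝ)) x) (g x) < η)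
    (r : ℝ) : μ.real {ω | X ω ≤ r} ≤ ∫ ω, g (X ω - (r + δ)) ∂μ + η := by
  have hg_int := integrable_comp_sub_of_mem_Icc (μ := μ) hX hg hg_mem (r + δ)
  calc μ.real {ω | X ω ≤ r} = ∫ ω, (Set.Iic r).indicator 1 (X ω) ∂μ :=
        (integral_indicator_one (measurableSet_le hX measurable_const)).symm
    _ ≤ ∫ ω, (g (X ω - (r + δ)) + η) ∂μ :=
        integral_mono (integrable_indicator_Iic_comp hX r) (hg_int.add (integrable_const η))
          fun ω => indicator_Iic_le_add (fun x => (hg_mem x).1) hδ hgδ r (X ω)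
    _ = ∫ ω, g (X ω - (r + δ)) ∂μ + η := by
        rw [integral_add hg_int (integrable_const η), integral_const, probReal_univ, one_smul]

theorem integral_sub_le_measureReal_setOf_le [IsProbabilityMeasure μ]
    (hX : Measurable X) (hg : Measurable g)
    (hg_mem : ∀ x, g x ∈ Set.Icc (0 : ℝ) 1) (hδ : 0 ≤ δ)
    (hgδ : ∀ x ∈ {x : ℝ | δ ≤ |x|}, dist ((Set.Iic 0).indicator (fun _ => (1 : ℝ)) x) (g x) < η)
    (r : ℝ) : ∫ ω, g (X ω - (r - δ)) ∂μ - η ≤ μ.real {ω | X ω ≤ r} := by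
  have hg_int := integrable_comp_sub_of_mem_Icc (μ := μ) hX hg hg_mem (r - δ)
  calc ∫ ω, g (X ω - (r - δ)) ∂μ - η = ∫ ω, (g (X ω - (r - δ)) - η) ∂μ := by
        rw [integral_sub hg_int (integrable_const η), integral_const, probReal_univ, one_smul]
    _ ≤ ∫ ω, (Set.Iic r).indicator 1 (X ω) ∂μ :=
        integral_mono (hg_int.sub (integrable_const η)) (integrable_indicator_Iic_comp hX r)
          fun ω => sub_le_indicator_Iic (fun x => (hg_mem x).2) hδ hgδ r (X ω)
    _ = μ.real {ω | X ω ≤ r} := integral_indicator_one (measurableSet_le hX measurable_const)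

end Expectation

theorem tendsto_prob_of_tendsto_expectation_general
    (f : ℕ → ℝ → ℝ)
    (hf_mem : ∀ n x, f n x ∈ Set.Icc (0 : ℝ) 1)
    (hf_mono : ∀ n, StrictMono (f n) ∨ StrictAnti (f n))
    (hf_unif : ∀ δ : ℝ, 0 < δ →
      TendstoUniformlyOn f (Set.indicator (Set.Iic 0) fun _ => (1 : ℝ)) atTop
        {x : ℝ | δ ≤ |x|})
    (Ω : ℕ → Type*) (inst : ∀ n, MeasurableSpace (Ω n))
    (μ : ∀ n, Measure (Ω n)) (hμ : ∀ n, IsProbabilityMeasure (μ n))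
    (X : ∀ n, Ω n → ℝ) (hX : ∀ n, Measurable (X n))
    (p : ℝ → ℝ)
    (hp_cont : Continuous p)
    (hlim : ∀ r : ℝ,
      Tendsto (fun n => ∫ ω, f n (X n ω - r) ∂(μ n)) atTop (nhds (p r))) :
    ∀ r : ℝ,
      Tendsto (fun n => ((μ n) {ω | X n ω ≤ r}).toReal) atTop (nhds (p r)) := by
  intro r
  have hf_meas : ∀ n, Measurable (f n) := fun n =>
    (hf_mono n).elim (fun h => h.monotone.measurable) fun h => h.antitone.measurable
  rw [Metric.tendsto_nhds]
  intro ε hε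
  obtain ⟨δ, hδ, hp_near⟩ := Metric.continuous_iff.mp hp_cont r (ε / 3) (by positivity)
  have hp_lo := hp_near (r - δ / 2) (by rw [Real.dist_eq, abs_lt]; constructor <;> linarith)
  have hp_hi := hp_near (r + δ / 2) (by rw [Real.dist_eq, abs_lt]; constructor <;> linarith)
  filter_upwards [Metric.tendstoUniformlyOn_iff.mp (hf_unif (δ / 2) (by positivity)) (ε / 3)
      (by positivity), Metric.tendsto_nhds.mp (hlim (r - δ / 2)) (ε / 3) (by positivity),
      Metric.tendsto_nhds.mp (hlim (r + δ / 2)) (ε / 3) (by positivity)]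
    with n hf_close hE_lo hE_hi
  have := hμ n
  have hlower := integral_sub_le_measureReal_setOf_le (μ := μ n) (hX n) (hf_meas n) (hf_mem n)
    (by positivity) hf_close r
  have hupper := measureReal_setOf_le_le_integral_add (μ := μ n) (hX n) (hf_meas n) (hf_mem n)
    (by positivity) hf_close r
  rw [Real.dist_eq] at hp_lo hp_hi hE_lo hE_hi ⊢
  rw [← measureReal_def, abs_sub_lt_iff]
  constructor <;> linarith [abs_sub_lt_iff.mp hp_lo, abs_sub_lt_iff.mp hp_hi,
    abs_sub_lt_iff.mp hE_lo, abs_sub_lt_iff.mp hE_hi]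

/-- Lemma 4.1.39 of Borodin–Corwin: if `fₙ : ℝ → [0,1]` are strictly monotone, converge to `0`
at `+∞` and to `1` at `-∞`, and converge uniformly to the indicator of `(-∞, 0]` away from any
neighbourhood of `0`, and if `E[fₙ(Xₙ - r)] → p(r)` for every `r`, where `p` is a continuous
probability distribution function, then `P(Xₙ ≤ r) → p(r)` for every `r`. -/
theorem tendsto_prob_of_tendsto_expectation
    (f : ℕ → ℝ → ℝ)
    (hf_mem : ∀ n x, f n x ∈ Set.Icc (0 : ℝ) 1)
    (hf_mono : ∀ n, StrictMono (f n) ∨ StrictAnti (f n))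
    (hf_top : ∀ n, Tendsto (f n) atTop (nhds 0))
    (hf_bot : ∀ n, Tendsto (f n) atBot (nhds 1))
    (hf_unif : ∀ δ : ℝ, 0 < δ →
      TendstoUniformlyOn f (Set.indicator (Set.Iic 0) fun _ => (1 : ℝ)) atTop
        {x : ℝ | δ ≤ |x|})
    (Ω : ℕ → Type*) (inst : ∀ n, MeasurableSpace (Ω n))
    (μ : ∀ n, Measure (Ω n)) (hμ : ∀ n, IsProbabilityMeasure (μ n))
    (X : ∀ n, Ω n → ℝ) (hX : ∀ n, Measurable (X n))
    (p : ℝ → ℝ)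
    (hp_mem : ∀ r, p r ∈ Set.Icc (0 : ℝ) 1)
    (hp_mono : Monotone p) (hp_cont : Continuous p)
    (hp_bot : Tendsto p atBot (nhds 0)) (hp_top : Tendsto p atTop (nhds 1))
    (hlim : ∀ r : ℝ,
      Tendsto (fun n => ∫ ω, f n (X n ω - r) ∂(μ n)) atTop (nhds (p r))) :
    ∀ r : ℝ,
      Tendsto (fun n => ((μ n) {ω | X n ω ≤ r}).toReal) atTop (nhds (p r)) :=
  tendsto_prob_of_tendsto_expectation_general f hf_mem hf_mono hf_unif Ω inst μ hμ X hX p hp_cont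
    hlim
end

section
/- Let c > 1. There exists γ* > 0 such that for every 0 < γ < γ* there is a unique z* > 0 satisfying ψ₁(z*) = c·ψ₁(z* + γ) (i.e., H_{c,γ}''(z*) = 0 where H_{c,γ}(z) = log Γ(z) − c log Γ(z + γ) + μz for any μ ∈ ℝ), and moreover ψ₂(z*) − c·ψ₂(z* + γ) < 0 at this point. -/
/-- The digamma function `ψ(x) = (d/dx) log Γ(x)`. -/
noncomputable def digamma (x : ℝ) : ℝ := deriv (fun y => Real.log (Real.Gamma y)) x

/-- The trigamma function `ψ₁ = ψ'`. -/
noncomputable def trigamma : ℝ → ℝ := deriv digamma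

/-- The polygamma function `ψ₂ = ψ₁'`. -/
noncomputable def polygammaTwo : ℝ → ℝ := deriv trigamma

/-!
Differentiating the Bohr–Mollerup limit for `log Γ` term by term gives, on `(0, ∞)`,
`ψ₁(x) = ∑ₘ (x + m)⁻²` and `ψ₂(x) = -2 ∑ₘ (x + m)⁻³`. By Cauchy–Schwarz,
`(∑ (x + m)⁻³)² ≤ ∑ (x + m)⁻⁴ · ∑ (x + m)⁻²`, which makes `ψ₂ / ψ₁ = (log ψ₁)'` strictly
increasing. Hence `z ↦ ψ₁(z) / ψ₁(z + γ)` is strictly decreasing for every `γ > 0`, so it takes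
the value `c` at most once; and at such a point `ψ₂(z) / ψ₁(z) < ψ₂(z + γ) / ψ₁(z + γ)` together
with `ψ₁(z) = c ψ₁(z + γ)` gives `ψ₂(z) < c ψ₂(z + γ)`. The value `c` is attained by the
intermediate value theorem, since `1 / x ≤ ψ₁(x) ≤ 1 / x + 1 / x²` makes the ratio blow up at `0`
and tend to `1 < c` at infinity. All of this holds for every `γ > 0`.
-/

open Filter Finset Set Topology Real

-- The Hurwitz zeta value `ζ(k, x)`; junk for `k ≤ 1`, where the series diverges.
noncomputable def hurwitzSum (k : ℕ) (x : ℝ) : ℝ := ∑' m : ℕ, ((x + m) ^ k)⁻¹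

lemma summable_inv_add_pow {x : ℝ} (hx : 0 < x) {k : ℕ} (hk : 2 ≤ k) :
    Summable fun m : ℕ => ((x + m) ^ k)⁻¹ := by
  have := (Real.summable_one_div_nat_add_rpow x k).2 (by exact_mod_cast hk)
  refine this.congr fun m => ?_
  rw [one_div, add_comm, abs_of_pos (by positivity), Real.rpow_natCast]

lemma hasDerivAt_inv_add_pow (k : ℕ) {a x : ℝ} (hx : x + a ≠ 0) :
    HasDerivAt (fun y => ((y + a) ^ k)⁻¹) (-k * ((x + a) ^ (k + 1))⁻¹) x := by
  have := (hasDerivAt_zpow (-k) (x + a) (.inl hx)).comp_add_const x a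
  simp only [zpow_neg, zpow_natCast] at this
  refine this.congr_deriv ?_
  rw [show (-(k : ℤ) - 1) = -((k + 1 : ℕ) : ℤ) by push_cast; ring, zpow_neg, zpow_natCast]
  push_cast; ring

lemma hurwitzSum_pos {x : ℝ} (hx : 0 < x) {k : ℕ} (hk : 2 ≤ k) : 0 < hurwitzSum k x :=
  (summable_inv_add_pow hx hk).tsum_pos (fun m => by positivity) 0 (by positivity)

lemma hasDerivAt_hurwitzSum {x : ℝ} (hx : 0 < x) {k : ℕ} (hk : 2 ≤ k) :
    HasDerivAt (hurwitzSum k) (-k * hurwitzSum (k + 1) x) x := by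
  have hx2 : 0 < x / 2 := by positivity
  have hx' : x ∈ Ioi (x / 2) := half_lt_self hx
  have := hasDerivAt_tsum_of_isPreconnected
    (g := fun (m : ℕ) (y : ℝ) => ((y + m) ^ k)⁻¹)
    (g' := fun (m : ℕ) (y : ℝ) => -k * ((y + m) ^ (k + 1))⁻¹)
    ((summable_inv_add_pow hx2 (by omega : 2 ≤ k + 1)).mul_left (k : ℝ)) isOpen_Ioi
    isPreconnected_Ioi (fun m y (hy : x / 2 < y) => hasDerivAt_inv_add_pow k ?_)
    (fun m y (hy : x / 2 < y) => ?_) hx' (summable_inv_add_pow hx hk) hx'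
  · rwa [tsum_mul_left] at this
  · have : 0 < y := hx2.trans hy
    positivity
  · have : 0 < y := hx2.trans hy
    rw [norm_mul, norm_neg, Real.norm_natCast, Real.norm_of_nonneg (by positivity)]
    gcongr

lemma hasSum_inv_sub_inv_add_one {x : ℝ} (hx : 0 < x) :
    HasSum (fun m : ℕ => (x + m)⁻¹ - (x + m + 1)⁻¹) x⁻¹ := by
  refine (hasSum_iff_tendsto_nat_of_nonneg (fun m => sub_nonneg.2 ?_) _).2 ?_
  · exact inv_anti₀ (by positivity) (by linarith)
  have hsum : ∀ n : ℕ, ∑ m ∈ range n, ((x + m)⁻¹ - (x + m + 1)⁻¹) = x⁻¹ - (x + n)⁻¹ := by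
    intro n
    simpa [add_assoc] using Finset.sum_range_sub' (fun m : ℕ => (x + m)⁻¹) n
  simp_rw [hsum]
  simpa using tendsto_const_nhds.sub
    (tendsto_inv_atTop_zero.comp (tendsto_atTop_add_const_left _ x tendsto_natCast_atTop_atTop))

lemma inv_sub_inv_add_one_le_inv_sq {a : ℝ} (ha : 0 < a) : a⁻¹ - (a + 1)⁻¹ ≤ (a ^ 2)⁻¹ := by
  rw [inv_sub_inv ha.ne' (by positivity), add_sub_cancel_left, one_div]
  exact inv_anti₀ (by positivity) (by nlinarith)

lemma inv_sq_le_inv_sub_inv_add_one {a : ℝ} (ha : 0 < a) : ((a + 1) ^ 2)⁻¹ ≤ a⁻¹ - (a + 1)⁻¹ := by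
  rw [inv_sub_inv ha.ne' (by positivity), add_sub_cancel_left, one_div]
  exact inv_anti₀ (by positivity) (by nlinarith)

lemma inv_le_hurwitzSum_two {x : ℝ} (hx : 0 < x) : x⁻¹ ≤ hurwitzSum 2 x :=
  hasSum_le (fun m => inv_sub_inv_add_one_le_inv_sq (by positivity))
    (hasSum_inv_sub_inv_add_one hx) (summable_inv_add_pow hx le_rfl).hasSum

lemma hurwitzSum_two_le {x : ℝ} (hx : 0 < x) : hurwitzSum 2 x ≤ x⁻¹ + (x ^ 2)⁻¹ := by
  have hs := summable_inv_add_pow hx le_rfl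
  have hterm (m : ℕ) : ((x + (m + 1 : ℕ)) ^ 2)⁻¹ ≤ (x + m)⁻¹ - (x + m + 1)⁻¹ := by
    simpa [add_assoc] using inv_sq_le_inv_sub_inv_add_one (by positivity : 0 < x + m)
  have htail :=
    hasSum_le hterm ((summable_nat_add_iff 1).2 hs).hasSum (hasSum_inv_sub_inv_add_one hx)
  rw [hurwitzSum, hs.tsum_eq_zero_add]
  simp only [CharP.cast_eq_zero, add_zero] at htail ⊢
  linarith

lemma sq_tsum_mul_le_tsum_sq_mul_tsum_sq {ι : Type*} {f g : ι → ℝ}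
    (hf : Summable fun i => f i ^ 2) (hg : Summable fun i => g i ^ 2) :
    (∑' i, f i * g i) ^ 2 ≤ (∑' i, f i ^ 2) * ∑' i, g i ^ 2 := by
  have hfg : Summable fun i => f i * g i := .of_norm_bounded (hf.add hg) fun i => by
    rw [Real.norm_eq_abs, abs_mul]
    nlinarith [sq_abs (f i), sq_abs (g i), sq_nonneg (|f i| - |g i|)]
  refine le_of_tendsto' (hfg.hasSum.pow 2) fun s => (s.sum_mul_sq_le_sq_mul_sq f g).trans ?_
  exact mul_le_mul (hf.sum_le_tsum s fun i _ => sq_nonneg _)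
    (hg.sum_le_tsum s fun i _ => sq_nonneg _) (s.sum_nonneg fun i _ => sq_nonneg _)
    (tsum_nonneg fun i => sq_nonneg _)

noncomputable def digammaSeq (n : ℕ) (y : ℝ) : ℝ := log n - ∑ m ∈ range (n + 1), (y + m)⁻¹

noncomputable def digammaSeries (y : ℝ) : ℝ :=
  -eulerMascheroniConstant - y⁻¹ + ∑' m : ℕ, (((m : ℝ) + 1)⁻¹ - (y + (m + 1))⁻¹)

lemma hasDerivAt_logGammaSeq {y : ℝ} (hy : 0 < y) (n : ℕ) :
    HasDerivAt (BohrMollerup.logGammaSeq · n) (digammaSeq n y) y := by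
  have hlog : HasDerivAt (fun z => ∑ m ∈ range (n + 1), log (z + m))
      (∑ m ∈ range (n + 1), (y + m)⁻¹) y :=
    .fun_sum fun m _ => ((hasDerivAt_log (by positivity)).comp_add_const y (m : ℝ))
  exact ((hasDerivAt_mul_const (log n)).add_const (log n.factorial)).sub hlog

lemma digammaSeq_eq {n : ℕ} (hn : n ≠ 0) (y : ℝ) :
    digammaSeq n y = -eulerMascheroniSeq' n - y⁻¹
      + ∑ m ∈ range n, (((m : ℝ) + 1)⁻¹ - (y + (m + 1))⁻¹) := by
  rw [digammaSeq, eulerMascheroniSeq', if_neg hn, harmonic, sum_range_succ', sum_sub_distrib]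
  push_cast
  simp only [add_zero]
  ring

lemma abs_inv_sub_inv_le {y : ℝ} (hy : 0 ≤ y) (m : ℕ) :
    |((m : ℝ) + 1)⁻¹ - (y + (m + 1))⁻¹| ≤ y * (((m : ℝ) + 1) ^ 2)⁻¹ := by
  rw [inv_sub_inv (by positivity) (by positivity), add_sub_cancel_right,
    abs_of_nonneg (by positivity), div_eq_mul_inv]
  gcongr
  nlinarith

lemma summable_inv_sub_inv {y : ℝ} (hy : 0 ≤ y) :
    Summable fun m : ℕ => ((m : ℝ) + 1)⁻¹ - (y + (m + 1))⁻¹ :=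
  .of_norm_bounded ((summable_inv_add_pow one_pos le_rfl).mul_left y)
    fun m => by simpa [add_comm] using abs_inv_sub_inv_le hy m

lemma tendstoUniformlyOn_digammaSeq (b : ℝ) :
    TendstoUniformlyOn digammaSeq digammaSeries atTop (Ioo 0 b) := by
  have hconst := tendsto_eulerMascheroniSeq'.neg.tendstoUniformlyOn_const (Ioo 0 b)
  have hinv : TendstoUniformlyOn (fun (_ : ℕ) (y : ℝ) => y⁻¹) (fun y => y⁻¹) atTop (Ioo 0 b) :=
    fun u hu => Eventually.of_forall fun _ _ _ => refl_mem_uniformity hu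
  have hseries := tendstoUniformlyOn_tsum_nat
    (f := fun (m : ℕ) (y : ℝ) => ((m : ℝ) + 1)⁻¹ - (y + (m + 1))⁻¹) (s := Ioo 0 b)
    ((summable_inv_add_pow one_pos le_rfl).mul_left b) fun m y hy => ?_
  · refine ((hconst.sub hinv).add hseries).congr ?_
    filter_upwards [eventually_ne_atTop 0] with n hn y _
    simp [digammaSeq_eq hn]
  · rw [Real.norm_eq_abs]
    refine (abs_inv_sub_inv_le hy.1.le m).trans ?_
    simpa [add_comm] using mul_le_mul_of_nonneg_right hy.2.le (by positivity)

lemma hasDerivAt_log_Gamma {x : ℝ} (hx : 0 < x) :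
    HasDerivAt (fun y => log (Gamma y)) (digammaSeries x) x := by
  have hmem : x ∈ Ioo 0 (x + 1) := ⟨hx, lt_add_one x⟩
  exact hasDerivAt_of_tendstoUniformlyOn isOpen_Ioo (tendstoUniformlyOn_digammaSeq _)
    (.of_forall fun n y hy => hasDerivAt_logGammaSeq hy.1 n)
    (fun y hy => BohrMollerup.tendsto_log_gamma hy.1) hmem

lemma hasDerivAt_digammaSeries {x : ℝ} (hx : 0 < x) :
    HasDerivAt digammaSeries (hurwitzSum 2 x) x := by
  have hx2 : 0 < x / 2 := by positivity
  have hx' : x ∈ Ioi (x / 2) := half_lt_self hx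
  have hseries := hasDerivAt_tsum_of_isPreconnected
    (g := fun (m : ℕ) (y : ℝ) => ((m : ℝ) + 1)⁻¹ - (y + (m + 1))⁻¹)
    (g' := fun (m : ℕ) (y : ℝ) => ((y + (m + 1)) ^ 2)⁻¹)
    ((summable_nat_add_iff 1).2 (summable_inv_add_pow hx2 le_rfl)) isOpen_Ioi isPreconnected_Ioi
    (fun m y (hy : x / 2 < y) => ?_) (fun m y (hy : x / 2 < y) => ?_) hx'
    (summable_inv_sub_inv hx.le) hx'
  · have hinv := (hasDerivAt_inv hx.ne').const_sub (-eulerMascheroniConstant)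
    refine (hinv.add hseries).congr_deriv ?_
    rw [neg_neg, hurwitzSum, (summable_inv_add_pow hx le_rfl).tsum_eq_zero_add]
    push_cast
    simp only [add_zero]
  · have : 0 < y := hx2.trans hy
    simpa using ((hasDerivAt_inv (by positivity)).comp_add_const y ((m : ℝ) + 1)).const_sub _
  · have : 0 < y := hx2.trans hy
    rw [Real.norm_of_nonneg (by positivity)]
    push_cast
    gcongr

lemma digamma_eq_digammaSeries {x : ℝ} (hx : 0 < x) : digamma x = digammaSeries x :=
  (hasDerivAt_log_Gamma hx).deriv

lemma hasDerivAt_digamma {x : ℝ} (hx : 0 < x) : HasDerivAt digamma (hurwitzSum 2 x) x :=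
  (hasDerivAt_digammaSeries hx).congr_of_eventuallyEq
    (eventually_of_mem (Ioi_mem_nhds hx) fun _ hy => digamma_eq_digammaSeries hy)

lemma trigamma_eq_hurwitzSum {x : ℝ} (hx : 0 < x) : trigamma x = hurwitzSum 2 x :=
  (hasDerivAt_digamma hx).deriv

lemma trigamma_eventuallyEq_hurwitzSum {x : ℝ} (hx : 0 < x) : trigamma =ᶠ[𝓝 x] hurwitzSum 2 :=
  eventually_of_mem (Ioi_mem_nhds hx) fun _ hy => trigamma_eq_hurwitzSum hy

lemma polygammaTwo_eq_hurwitzSum {x : ℝ} (hx : 0 < x) :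
    polygammaTwo x = -2 * hurwitzSum 3 x := by
  rw [polygammaTwo, (trigamma_eventuallyEq_hurwitzSum hx).deriv_eq]
  simpa using (hasDerivAt_hurwitzSum hx le_rfl).deriv

lemma hasDerivAt_trigamma {x : ℝ} (hx : 0 < x) : HasDerivAt trigamma (polygammaTwo x) x := by
  rw [polygammaTwo_eq_hurwitzSum hx]
  simpa using (hasDerivAt_hurwitzSum hx le_rfl).congr_of_eventuallyEq
    (trigamma_eventuallyEq_hurwitzSum hx)

lemma sq_hurwitzSum_three_le {x : ℝ} (hx : 0 < x) :
    hurwitzSum 3 x ^ 2 ≤ hurwitzSum 4 x * hurwitzSum 2 x := by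
  have key := sq_tsum_mul_le_tsum_sq_mul_tsum_sq (f := fun m : ℕ => ((x + m) ^ 2)⁻¹)
    (g := fun m : ℕ => (x + m)⁻¹)
    (by simpa [← pow_mul] using summable_inv_add_pow hx (k := 4) (by norm_num))
    (by simpa using summable_inv_add_pow hx (k := 2) le_rfl)
  unfold hurwitzSum
  convert key using 4 <;> field_simp

lemma strictAntiOn_hurwitzSum_three_div_two :
    StrictAntiOn (fun x => hurwitzSum 3 x / hurwitzSum 2 x) (Ioi 0) := by
  have hderiv : ∀ x ∈ Ioi (0 : ℝ), HasDerivAt (fun x => hurwitzSum 3 x / hurwitzSum 2 x)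
      ((2 * hurwitzSum 3 x ^ 2 - 3 * hurwitzSum 4 x * hurwitzSum 2 x) / hurwitzSum 2 x ^ 2) x :=
    fun x (hx : 0 < x) => ((hasDerivAt_hurwitzSum hx (k := 3) (by norm_num)).div
      (hasDerivAt_hurwitzSum hx le_rfl) (hurwitzSum_pos hx le_rfl).ne').congr_deriv (by
        push_cast; ring)
  refine strictAntiOn_of_deriv_neg (convex_Ioi 0)
    (fun x hx => (hderiv x hx).continuousAt.continuousWithinAt) fun x hx => ?_
  rw [interior_Ioi] at hx
  rw [(hderiv x hx).deriv]
  have h4 := hurwitzSum_pos hx (k := 4) (by norm_num)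
  have h2 := hurwitzSum_pos hx le_rfl
  refine div_neg_of_neg_of_pos ?_ (by positivity)
  nlinarith [sq_hurwitzSum_three_le hx, mul_pos h4 h2]

lemma trigamma_pos {x : ℝ} (hx : 0 < x) : 0 < trigamma x :=
  trigamma_eq_hurwitzSum hx ▸ hurwitzSum_pos hx le_rfl

lemma inv_le_trigamma {x : ℝ} (hx : 0 < x) : x⁻¹ ≤ trigamma x :=
  trigamma_eq_hurwitzSum hx ▸ inv_le_hurwitzSum_two hx

lemma trigamma_le {x : ℝ} (hx : 0 < x) : trigamma x ≤ x⁻¹ + (x ^ 2)⁻¹ :=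
  trigamma_eq_hurwitzSum hx ▸ hurwitzSum_two_le hx

lemma strictMonoOn_polygammaTwo_div_trigamma :
    StrictMonoOn (fun x => polygammaTwo x / trigamma x) (Ioi 0) := by
  intro x (hx : 0 < x) y (hy : 0 < y) hxy
  have := strictAntiOn_hurwitzSum_three_div_two hx hy hxy
  simp only [polygammaTwo_eq_hurwitzSum, trigamma_eq_hurwitzSum, hx, hy, mul_div_assoc]
  linarith

lemma strictAntiOn_div_comp_add {f f' : ℝ → ℝ} {a γ : ℝ} (hγ : 0 < γ)
    (hpos : ∀ x ∈ Ioi a, 0 < f x) (hf : ∀ x ∈ Ioi a, HasDerivAt f (f' x) x)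
    (hmono : StrictMonoOn (fun x => f' x / f x) (Ioi a)) :
    StrictAntiOn (fun z => f z / f (z + γ)) (Ioi a) := by
  have hshift : ∀ z ∈ Ioi a, z + γ ∈ Ioi a := fun z (hz : a < z) => show a < z + γ by linarith
  have hderiv : ∀ z ∈ Ioi a, HasDerivAt (fun z => f z / f (z + γ))
      ((f' z * f (z + γ) - f z * f' (z + γ)) / f (z + γ) ^ 2) z := fun z hz =>
    (hf z hz).div ((hf _ (hshift z hz)).comp_add_const z γ) (hpos _ (hshift z hz)).ne'
  refine strictAntiOn_of_deriv_neg (convex_Ioi a)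
    (fun z hz => (hderiv z hz).continuousAt.continuousWithinAt) fun z hz => ?_
  rw [interior_Ioi] at hz
  rw [(hderiv z hz).deriv]
  have hlt := hmono hz (hshift z hz) (lt_add_of_pos_right z hγ)
  rw [div_lt_div_iff₀ (hpos z hz) (hpos _ (hshift z hz))] at hlt
  exact div_neg_of_neg_of_pos (by linarith) (pow_pos (hpos _ (hshift z hz)) 2)

lemma strictAntiOn_trigamma_div_trigamma_add {γ : ℝ} (hγ : 0 < γ) :
    StrictAntiOn (fun z => trigamma z / trigamma (z + γ)) (Ioi 0) :=
  strictAntiOn_div_comp_add hγ (fun _ => trigamma_pos) (fun _ => hasDerivAt_trigamma)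
    strictMonoOn_polygammaTwo_div_trigamma

lemma polygammaTwo_lt_mul_of_trigamma_eq_mul {c γ z : ℝ} (hc : 0 < c) (hγ : 0 < γ) (hz : 0 < z)
    (h : trigamma z = c * trigamma (z + γ)) : polygammaTwo z < c * polygammaTwo (z + γ) := by
  have hzγ : 0 < z + γ := by linarith
  have hlt := strictMonoOn_polygammaTwo_div_trigamma hz hzγ (lt_add_of_pos_right z hγ)
  simp only [h, div_mul_eq_div_div, div_lt_div_iff_of_pos_right (trigamma_pos hzγ)] at hlt
  rwa [div_lt_iff₀ hc, mul_comm] at hlt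

lemma exists_mul_trigamma_add_le_trigamma {c γ : ℝ} (hc : 0 < c) (hγ : 0 < γ) :
    ∃ z, 0 < z ∧ c * trigamma (z + γ) ≤ trigamma z := by
  set M := γ⁻¹ + (γ ^ 2)⁻¹
  have hM : 0 < M := by positivity
  refine ⟨(c * M)⁻¹, by positivity, ?_⟩
  have hzγ : γ < (c * M)⁻¹ + γ := lt_add_of_pos_left γ (by positivity)
  calc c * trigamma ((c * M)⁻¹ + γ)
      ≤ c * (((c * M)⁻¹ + γ)⁻¹ + (((c * M)⁻¹ + γ) ^ 2)⁻¹) := by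
        gcongr; exact trigamma_le (by positivity)
    _ ≤ c * M := by
        gcongr
        exact add_le_add (inv_anti₀ hγ hzγ.le) (inv_anti₀ (by positivity) (by gcongr))
    _ = ((c * M)⁻¹)⁻¹ := (inv_inv _).symm
    _ ≤ trigamma (c * M)⁻¹ := inv_le_trigamma (by positivity)

lemma exists_trigamma_le_mul_trigamma_add {c γ : ℝ} (hc : 1 < c) (hγ : 0 < γ) :
    ∃ z, 0 < z ∧ trigamma z ≤ c * trigamma (z + γ) := by
  -- `z ≥ 1` and `(c - 1) z ≥ 1 + 2γ` give `(z + 1)(z + γ) ≤ c z²`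
  set z := 1 + (1 + 2 * γ) / (c - 1)
  have hz : 1 ≤ z := le_add_of_nonneg_right (div_nonneg (by linarith) (by linarith))
  have hcz : (c - 1) * z = c - 1 + (1 + 2 * γ) := by
    simp only [z]; field_simp [(sub_pos.2 hc).ne']
  refine ⟨z, by linarith, ?_⟩
  calc trigamma z ≤ z⁻¹ + (z ^ 2)⁻¹ := trigamma_le (by linarith)
    _ ≤ c * (z + γ)⁻¹ := by
        rw [← div_eq_mul_inv, inv_eq_one_div, inv_eq_one_div, div_add_div _ _ (by positivity)
          (by positivity), div_le_div_iff₀ (by positivity) (by positivity)]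
        nlinarith
    _ ≤ c * trigamma (z + γ) := by gcongr; exact inv_le_trigamma (by linarith)

lemma exists_trigamma_eq_mul_trigamma_add {c γ : ℝ} (hc : 1 < c) (hγ : 0 < γ) :
    ∃ z, 0 < z ∧ trigamma z = c * trigamma (z + γ) := by
  obtain ⟨z₁, hz₁, h₁⟩ := exists_mul_trigamma_add_le_trigamma (c := c) (by linarith) hγ
  obtain ⟨z₂, hz₂, h₂⟩ := exists_trigamma_le_mul_trigamma_add hc hγ
  have hpos : ∀ t ∈ uIcc z₁ z₂, 0 < t := fun t ht => lt_of_lt_of_le (lt_min hz₁ hz₂) ht.1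
  have hcont : ContinuousOn (fun z => trigamma z - c * trigamma (z + γ)) (uIcc z₁ z₂) :=
    fun t ht => ((hasDerivAt_trigamma (hpos t ht)).continuousAt.sub (continuousAt_const.mul
      ((hasDerivAt_trigamma (by linarith [hpos t ht])).comp_add_const t γ).continuousAt))
        |>.continuousWithinAt
  obtain ⟨z, hz, hroot⟩ := intermediate_value_uIcc hcont
    (mem_uIcc.2 (.inr ⟨sub_nonpos.2 h₂, sub_nonneg.2 h₁⟩) : (0 : ℝ) ∈ _)
  exact ⟨z, hpos z hz, sub_eq_zero.1 hroot⟩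

/-- For `c > 1` and `γ > 0` small enough there exists a unique `z* > 0` with
`ψ₁(z*) = c·ψ₁(z* + γ)` (i.e. `H''_{c,γ}(z*) = 0`), and moreover
`ψ₂(z*) - c·ψ₂(z* + γ) < 0` there. -/
theorem exists_unique_critical_point (c : ℝ) (hc : 1 < c) :
    ∃ γstar > (0 : ℝ), ∀ γ : ℝ, 0 < γ → γ < γstar →
      (∃! z : ℝ, 0 < z ∧ trigamma z = c * trigamma (z + γ)) ∧
      (∀ z : ℝ, 0 < z → trigamma z = c * trigamma (z + γ) →
        polygammaTwo z - c * polygammaTwo (z + γ) < 0) := by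
  refine ⟨1, one_pos, fun γ hγ _ => ⟨?_, fun z hz hroot => ?_⟩⟩
  · obtain ⟨z, hz, hroot⟩ := exists_trigamma_eq_mul_trigamma_add hc hγ
    have hratio : ∀ w, 0 < w → trigamma w = c * trigamma (w + γ) →
        trigamma w / trigamma (w + γ) = c := fun w hw h =>
      (div_eq_iff (trigamma_pos (by linarith)).ne').2 h
    refine ⟨z, ⟨hz, hroot⟩, fun w ⟨hw, hwroot⟩ => ?_⟩
    exact (strictAntiOn_trigamma_div_trigamma_add hγ).injOn hw hz
      ((hratio w hw hwroot).trans (hratio z hz hroot).symm)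
  · exact sub_neg.2 (polygammaTwo_lt_mul_of_trigamma_eq_mul (by linarith) hγ hz hroot)
end

section
/- Let c > 1 and for γ > 0 small let μ_{c,γ} = inf_{z>0} [c·ψ(z + γ) − ψ(z)]. Then lim_{γ → 0+} γ·μ_{c,γ} = −(√c − 1)². -/
/-!
By `ψ(x + 1) = ψ x + 1/x`,
`c ψ(z + γ) - ψ z = (1/z - c/(z + γ)) + (c ψ(z + γ + 1) - ψ(z + 1))`.
Since `ψ` is increasing (`log Γ` is convex), the second bracket is at least `(c - 1) ψ 1` for
every `z > 0` and at most `c ψ 2 - ψ 1` when `z + γ ≤ 1`. The first bracket is `-(√c - 1)²/γ`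
plus a nonnegative term vanishing at `z = γ/(√c - 1)`, which is `≤ 1 - γ` for small `γ`.
Hence `μ_{c,γ} = -(√c - 1)²/γ + O(1)`.
-/

open Filter

open Set Topology

noncomputable def mu (c γ : ℝ) : ℝ :=
  sInf {y : ℝ | ∃ z : ℝ, 0 < z ∧ y = c * digamma (z + γ) - digamma z}

lemma differentiableAt_log_Gamma {x : ℝ} (hx : 0 < x) :
    DifferentiableAt ℝ (fun y => Real.log (Real.Gamma y)) x :=
  (Real.differentiableAt_Gamma fun m h => by
      linarith [h ▸ hx, (Nat.cast_nonneg m : (0 : ℝ) ≤ m)]).log (Real.Gamma_pos_of_pos hx).ne'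

lemma digamma_monotoneOn : MonotoneOn digamma (Ioi 0) := fun a ha b hb hab => by
  simpa [digamma, Function.comp_def] using Real.convexOn_log_Gamma.monotoneOn_deriv
    (fun x hx => differentiableAt_log_Gamma hx) ha hb hab

lemma digamma_add_one {x : ℝ} (hx : 0 < x) : digamma (x + 1) = digamma x + 1 / x := by
  have hshift : (fun y => Real.log (Real.Gamma (y + 1)))
      =ᶠ[𝓝 x] (fun y => Real.log y + Real.log (Real.Gamma y)) := by
    filter_upwards [eventually_gt_nhds hx] with y hy
    rw [Real.Gamma_add_one hy.ne', Real.log_mul hy.ne' (Real.Gamma_pos_of_pos hy).ne']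
  calc digamma (x + 1) = deriv (fun y => Real.log (Real.Gamma (y + 1))) x := by
        simpa [digamma] using (deriv_comp_add_const (fun y => Real.log (Real.Gamma y)) 1 x).symm
    _ = deriv (fun y => Real.log y + Real.log (Real.Gamma y)) x := hshift.deriv_eq
    _ = digamma x + 1 / x := by
        rw [deriv_fun_add (Real.differentiableAt_log hx.ne') (differentiableAt_log_Gamma hx),
          Real.deriv_log, one_div, add_comm]
        rfl

lemma mul_digamma_add_sub_digamma {c γ z : ℝ} (hz : 0 < z) (hzγ : 0 < z + γ) :
    c * digamma (z + γ) - digamma z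
      = (1 / z - c / (z + γ)) + (c * digamma (z + γ + 1) - digamma (z + 1)) := by
  rw [digamma_add_one hz, digamma_add_one hzγ]
  ring

lemma one_div_sub_div_eq {c γ z : ℝ} (hc : 0 ≤ c) (hγ : 0 < γ) (hz : 0 < z) :
    1 / z - c / (z + γ)
      = -(√c - 1) ^ 2 / γ + ((√c - 1) * z - γ) ^ 2 / (γ * z * (z + γ)) := by
  have hzγ : z + γ ≠ 0 := by linarith
  conv_lhs => rw [← Real.sq_sqrt hc]
  field_simp
  ring

lemma neg_sq_div_le_one_div_sub_div {c γ z : ℝ} (hc : 0 ≤ c) (hγ : 0 < γ) (hz : 0 < z) :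
    -(√c - 1) ^ 2 / γ ≤ 1 / z - c / (z + γ) := by
  rw [one_div_sub_div_eq hc hγ hz, le_add_iff_nonneg_right]
  positivity

lemma one_div_sub_div_eq_of_eq {c γ z : ℝ} (hc : 0 ≤ c) (hγ : 0 < γ) (hz : 0 < z)
    (hzc : z = γ / (√c - 1)) :
    1 / z - c / (z + γ) = -(√c - 1) ^ 2 / γ := by
  have hs : √c - 1 ≠ 0 := fun h => hz.ne' (by rw [hzc, h, div_zero])
  rw [one_div_sub_div_eq hc hγ hz, hzc, mul_div_cancel₀ _ hs]
  simp

lemma neg_sq_div_add_le_mul_digamma_add_sub_digamma {c γ z : ℝ} (hc : 1 ≤ c) (hγ : 0 < γ)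
    (hz : 0 < z) :
    -(√c - 1) ^ 2 / γ + (c - 1) * digamma 1 ≤ c * digamma (z + γ) - digamma z := by
  have hψ₁ : digamma 1 ≤ digamma (z + 1) :=
    digamma_monotoneOn (by norm_num) (mem_Ioi.2 (by linarith)) (by linarith)
  have hψ₂ : digamma (z + 1) ≤ digamma (z + γ + 1) :=
    digamma_monotoneOn (mem_Ioi.2 (by linarith)) (mem_Ioi.2 (by linarith)) (by linarith)
  rw [mul_digamma_add_sub_digamma hz (by linarith)]
  nlinarith [neg_sq_div_le_one_div_sub_div (by linarith : (0 : ℝ) ≤ c) hγ hz]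

lemma neg_sq_div_add_le_mu {c γ : ℝ} (hc : 1 ≤ c) (hγ : 0 < γ) :
    -(√c - 1) ^ 2 / γ + (c - 1) * digamma 1 ≤ mu c γ := by
  refine le_csInf ⟨_, 1, one_pos, rfl⟩ ?_
  rintro y ⟨z, hz, rfl⟩
  exact neg_sq_div_add_le_mul_digamma_add_sub_digamma hc hγ hz

lemma mu_le_neg_sq_div_add {c γ : ℝ} (hc : 1 < c) (hγ : 0 < γ)
    (hsmall : γ / (√c - 1) + γ ≤ 1) :
    mu c γ ≤ -(√c - 1) ^ 2 / γ + (c * digamma 2 - digamma 1) := by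
  have hs : 0 < √c - 1 := by
    rw [sub_pos, Real.lt_sqrt zero_le_one]
    simpa using hc
  set z := γ / (√c - 1)
  have hz : 0 < z := div_pos hγ hs
  have hbdd : BddBelow {y : ℝ | ∃ z : ℝ, 0 < z ∧ y = c * digamma (z + γ) - digamma z} :=
    ⟨_, by
      rintro y ⟨z, hz, rfl⟩
      exact neg_sq_div_add_le_mul_digamma_add_sub_digamma hc.le hγ hz⟩
  have hψ₁ : digamma 1 ≤ digamma (z + 1) :=
    digamma_monotoneOn (by norm_num) (mem_Ioi.2 (by linarith)) (by linarith)
  have hψ₂ : digamma (z + γ + 1) ≤ digamma 2 :=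
    digamma_monotoneOn (mem_Ioi.2 (by linarith)) (by norm_num) (by linarith)
  calc mu c γ ≤ c * digamma (z + γ) - digamma z := csInf_le hbdd ⟨z, hz, rfl⟩
    _ = -(√c - 1) ^ 2 / γ + (c * digamma (z + γ + 1) - digamma (z + 1)) := by
        rw [mul_digamma_add_sub_digamma hz (by linarith),
          one_div_sub_div_eq_of_eq (by linarith) hγ hz rfl]
    _ ≤ -(√c - 1) ^ 2 / γ + (c * digamma 2 - digamma 1) := by gcongr

lemma tendsto_mul_nhdsGT_of_div_add_le_of_le_div_add {f : ℝ → ℝ} {a L M : ℝ}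
    (hlow : ∀ᶠ γ in 𝓝[>] 0, a / γ + L ≤ f γ) (hup : ∀ᶠ γ in 𝓝[>] 0, f γ ≤ a / γ + M) :
    Tendsto (fun γ => γ * f γ) (𝓝[>] 0) (𝓝 a) := by
  have hlim : ∀ K : ℝ, Tendsto (fun γ : ℝ => a + γ * K) (𝓝[>] 0) (𝓝 a) := fun K =>
    tendsto_nhdsWithin_of_tendsto_nhds <| by
      simpa using (by fun_prop : Continuous fun γ : ℝ => a + γ * K).tendsto 0
  have hmul : ∀ K, ∀ᶠ γ in 𝓝[>] (0 : ℝ), γ * (a / γ + K) = a + γ * K := fun K => by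
    filter_upwards [self_mem_nhdsWithin] with γ (hγ : 0 < γ)
    field_simp
  refine tendsto_of_tendsto_of_tendsto_of_le_of_le' (hlim L) (hlim M) ?_ ?_
  · filter_upwards [hlow, hmul L, self_mem_nhdsWithin] with γ h heq (hγ : 0 < γ)
    exact heq ▸ mul_le_mul_of_nonneg_left h hγ.le
  · filter_upwards [hup, hmul M, self_mem_nhdsWithin] with γ h heq (hγ : 0 < γ)
    exact heq ▸ mul_le_mul_of_nonneg_left h hγ.le

/-- With `μ_{c,γ} = inf_{z>0} [c·ψ(z + γ) - ψ(z)]`, one has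
`γ·μ_{c,γ} → -(√c - 1)²` as `γ → 0+`. -/
theorem gamma_mul_mu_tendsto (c : ℝ) (hc : 1 < c) :
    Tendsto
      (fun γ : ℝ =>
        γ * sInf {y : ℝ | ∃ z : ℝ, 0 < z ∧ y = c * digamma (z + γ) - digamma z})
      (nhdsWithin 0 (Set.Ioi 0))
      (nhds (-(Real.sqrt c - 1) ^ 2)) := by
  have hsmall : ∀ᶠ γ in 𝓝[>] (0 : ℝ), γ / (√c - 1) + γ ≤ 1 := by
    have h : Tendsto (fun γ : ℝ => γ / (√c - 1) + γ) (𝓝 0) (𝓝 0) := by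
      simpa using (by fun_prop : Continuous fun γ : ℝ => γ / (√c - 1) + γ).tendsto 0
    exact (tendsto_nhdsWithin_of_tendsto_nhds h).eventually (eventually_le_nhds one_pos)
  change Tendsto (fun γ => γ * mu c γ) _ _
  exact tendsto_mul_nhdsGT_of_div_add_le_of_le_div_add
    (eventually_mem_nhdsWithin.mono fun γ hγ => neg_sq_div_add_le_mu hc.le hγ)
    ((eventually_mem_nhdsWithin.and hsmall).mono fun γ h => mu_le_neg_sq_div_add hc h.1 h.2)
end

section
/- For each γ > 0 let Gamma(γ) denote the Gamma distribution on (0,∞) with shape γ and rate 1. Then for every t ∈ ℝ, lim_{γ → 0+} Gamma(γ)({x > 0 : −γ·log x ≤ t}) equals 1 − e^{−t} if t ≥ 0 and equals 0 if t < 0. In other words, if G_γ is Gamma(γ)-distributed then −γ·log G_γ converges in distribution, as γ → 0+, to a standard exponential random variable. -/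
/-!
For `γ > 0` the event is `{G ≥ b}` with `b = exp (-t / γ)`, so that `b ^ γ = exp (-t)`.
On `(0, b]` with `b ≤ 1`, since `0 ≤ 1 - e^{-x} ≤ x`, replacing `e^{-x}` by `1` in the density
`x^{γ-1} e^{-x} / Γ(γ)` costs at most `∫₀ᵇ x^γ dx ≤ 1` in the integral,
hence `P(G < b) = b^γ / Γ(γ+1) + O(1 / Γ(γ))`.
As `γ → 0+`, `Γ(γ+1) → 1` and `1 / Γ(γ) = γ / Γ(γ+1) → 0`, which gives `1 - e^{-t}` when `t ≥ 0`;
when `t < 0` we have `b ≥ 1` and `P(G ≥ b) ≤ P(G ≥ 1) → 0`.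
-/

open Filter ProbabilityTheory MeasureTheory Real Set Topology

namespace Real

theorem inv_Gamma_eq_mul_inv_Gamma_add_one (s : ℝ) : (Gamma s)⁻¹ = s * (Gamma (s + 1))⁻¹ := by
  rcases ne_or_eq s 0 with hs | rfl
  · rw [Gamma_add_one hs, mul_inv, mul_inv_cancel_left₀ hs]
  · rw [zero_add, Gamma_zero, inv_zero, zero_mul]

theorem tendsto_Gamma_add_one_nhds_zero : Tendsto (fun s => Gamma (s + 1)) (𝓝 0) (𝓝 1) := by
  have hcont : ContinuousAt Gamma 1 :=
    (differentiableAt_Gamma fun m h => by linarith [(m.cast_nonneg : (0 : ℝ) ≤ m)]).continuousAt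
  simpa only [Function.comp_def, Gamma_one] using
    hcont.tendsto.comp ((continuous_add_const (1 : ℝ)).tendsto' 0 1 (zero_add 1))

theorem tendsto_inv_Gamma_nhds_zero : Tendsto (fun s => (Gamma s)⁻¹) (𝓝 0) (𝓝 0) := by
  refine Tendsto.congr (fun s => (inv_Gamma_eq_mul_inv_Gamma_add_one s).symm) ?_
  simpa using tendsto_id.mul (tendsto_Gamma_add_one_nhds_zero.inv₀ one_ne_zero)

end Real

theorem integral_exp_neg_mul_rpow_sub_one_bounds {γ b : ℝ} (hγ : 0 < γ) (hb : 0 ≤ b) :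
    0 ≤ b ^ γ / γ - ∫ x in 0..b, exp (-x) * x ^ (γ - 1) ∧
      b ^ γ / γ - ∫ x in 0..b, exp (-x) * x ^ (γ - 1) ≤ b ^ (γ + 1) / (γ + 1) := by
  have hpow : IntervalIntegrable (fun x : ℝ => x ^ (γ - 1)) volume 0 b :=
    intervalIntegral.intervalIntegrable_rpow' (by linarith)
  have hdiff : b ^ γ / γ - ∫ x in 0..b, exp (-x) * x ^ (γ - 1)
      = ∫ x in 0..b, (1 - exp (-x)) * x ^ (γ - 1) := by
    have hI : ∫ x in 0..b, x ^ (γ - 1) = b ^ γ / γ := by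
      rw [integral_rpow (Or.inl (by linarith)), sub_add_cancel, zero_rpow hγ.ne', sub_zero]
    simp_rw [sub_mul, one_mul]
    rw [intervalIntegral.integral_sub hpow (hpow.continuousOn_mul (by fun_prop)), hI]
  have hI1 : ∫ x in 0..b, x ^ γ = b ^ (γ + 1) / (γ + 1) := by
    rw [integral_rpow (Or.inl (by linarith)), zero_rpow (by linarith), sub_zero]
  rw [hdiff, ← hI1]
  constructor
  · refine intervalIntegral.integral_nonneg hb fun x hx => ?_
    have : exp (-x) ≤ 1 := exp_le_one_iff.2 (by linarith [hx.1])
    exact mul_nonneg (by linarith) (rpow_nonneg hx.1 _)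
  · refine intervalIntegral.integral_mono_on_of_le_Ioo hb
      (hpow.continuousOn_mul (by fun_prop))
      (intervalIntegral.intervalIntegrable_rpow' (by linarith)) fun x hx => ?_
    calc (1 - exp (-x)) * x ^ (γ - 1) ≤ x * x ^ (γ - 1) := by
          gcongr
          · exact rpow_nonneg hx.1.le _
          · linarith [add_one_le_exp (-x)]
      _ = x ^ γ := by rw [mul_comm, rpow_sub_one hx.1.ne', div_mul_cancel₀ _ hx.1.ne']

theorem gammaMeasure_one_Ici {γ b : ℝ} (hγ : 0 < γ) (hb : 0 ≤ b) :
    gammaMeasure γ 1 (Ici b)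
      = ENNReal.ofReal ((∫ x in Ioi b, exp (-x) * x ^ (γ - 1)) / Gamma γ) := by
  have hint : IntegrableOn (fun x => exp (-x) * x ^ (γ - 1) / Gamma γ) (Ici b) :=
    ((integrableOn_Ici_iff_integrableOn_Ioi enorm_ne_top).2
      ((GammaIntegral_convergent hγ).mono_set (Ioi_subset_Ioi hb))).div_const _
  rw [gammaMeasure, withDensity_apply _ measurableSet_Ici, ← integral_Ici_eq_integral_Ioi,
    ← integral_div, ofReal_integral_eq_lintegral_ofReal hint]
  · refine setLIntegral_congr_fun measurableSet_Ici fun x hx => ?_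
    rw [gammaPDF_of_nonneg (hb.trans hx)]
    simp only [one_rpow, one_mul]
    ring_nf
  · filter_upwards [ae_restrict_mem measurableSet_Ici] with x hx
    have hx0 : 0 ≤ x := hb.trans hx
    have := Gamma_pos_of_pos hγ
    positivity

theorem gammaMeasure_one_Ici_toReal {γ b : ℝ} (hγ : 0 < γ) (hb : 0 ≤ b) :
    (gammaMeasure γ 1 (Ici b)).toReal
      = 1 - (∫ x in 0..b, exp (-x) * x ^ (γ - 1)) / Gamma γ := by
  have hΓ := Gamma_pos_of_pos hγ
  have htail : 0 ≤ ∫ x in Ioi b, exp (-x) * x ^ (γ - 1) :=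
    setIntegral_nonneg measurableSet_Ioi fun x hx => by
      have : 0 < x := hb.trans_lt hx
      positivity
  rw [gammaMeasure_one_Ici hγ hb, ENNReal.toReal_ofReal (div_nonneg htail hΓ.le),
    ← intervalIntegral.integral_Ioi_sub_Ioi (GammaIntegral_convergent hγ) hb,
    ← Gamma_eq_integral hγ]
  field_simp
  ring

theorem gammaMeasure_one_Ici_toReal_bounds {γ b : ℝ} (hγ : 0 < γ) (hb₀ : 0 ≤ b) (hb₁ : b ≤ 1) :
    1 - b ^ γ / Gamma (γ + 1) ≤ (gammaMeasure γ 1 (Ici b)).toReal ∧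
      (gammaMeasure γ 1 (Ici b)).toReal ≤ 1 - b ^ γ / Gamma (γ + 1) + (Gamma γ)⁻¹ := by
  have hΓ := Gamma_pos_of_pos hγ
  obtain ⟨hlow, hup⟩ := integral_exp_neg_mul_rpow_sub_one_bounds hγ hb₀
  have hdiff : (gammaMeasure γ 1 (Ici b)).toReal - (1 - b ^ γ / Gamma (γ + 1))
      = (b ^ γ / γ - ∫ x in 0..b, exp (-x) * x ^ (γ - 1)) / Gamma γ := by
    rw [gammaMeasure_one_Ici_toReal hγ hb₀, Gamma_add_one hγ.ne']
    field_simp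
    ring
  have hsmall : b ^ (γ + 1) / (γ + 1) ≤ 1 :=
    div_le_one_of_le₀ ((rpow_le_one hb₀ hb₁ (by linarith)).trans (by linarith)) (by linarith)
  have h₀ : 0 ≤ (b ^ γ / γ - ∫ x in 0..b, exp (-x) * x ^ (γ - 1)) / Gamma γ :=
    div_nonneg hlow hΓ.le
  have h₁ : (b ^ γ / γ - ∫ x in 0..b, exp (-x) * x ^ (γ - 1)) / Gamma γ ≤ (Gamma γ)⁻¹ := by
    rw [inv_eq_one_div]
    gcongr
    exact hup.trans hsmall
  constructor <;> linarith

theorem setOf_neg_mul_log_le_eq_Ici {γ : ℝ} (hγ : 0 < γ) (t : ℝ) :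
    {x : ℝ | 0 < x ∧ -(γ * log x) ≤ t} = Ici (exp (-t / γ)) := by
  ext x
  simp only [mem_ofPred_eq, mem_Ici]
  constructor
  · rintro ⟨hx, hle⟩
    rw [← le_log_iff_exp_le hx, div_le_iff₀ hγ]
    linarith
  · intro hle
    have hx : 0 < x := (exp_pos _).trans_le hle
    rw [← le_log_iff_exp_le hx, div_le_iff₀ hγ] at hle
    exact ⟨hx, by linarith⟩

theorem gammaMeasure_one_Ici_exp_neg_div_toReal_bounds {γ t : ℝ} (hγ : 0 < γ) (ht : 0 ≤ t) :
    1 - exp (-t) / Gamma (γ + 1) ≤ (gammaMeasure γ 1 (Ici (exp (-t / γ)))).toReal ∧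
      (gammaMeasure γ 1 (Ici (exp (-t / γ)))).toReal
        ≤ 1 - exp (-t) / Gamma (γ + 1) + (Gamma γ)⁻¹ := by
  have hb₁ : exp (-t / γ) ≤ 1 :=
    exp_le_one_iff.2 (div_nonpos_of_nonpos_of_nonneg (by linarith) hγ.le)
  have h := gammaMeasure_one_Ici_toReal_bounds hγ (exp_pos _).le hb₁
  rwa [← exp_mul, div_mul_cancel₀ _ hγ.ne'] at h

theorem gammaMeasure_one_Ici_toReal_le_of_one_le {γ b : ℝ} (hγ : 0 < γ) (hb : 1 ≤ b) :
    (gammaMeasure γ 1 (Ici b)).toReal ≤ 1 - 1 / Gamma (γ + 1) + (Gamma γ)⁻¹ := by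
  have := isProbabilityMeasure_gammaMeasure hγ one_pos
  have h := (gammaMeasure_one_Ici_toReal_bounds hγ zero_le_one le_rfl).2
  rw [one_rpow] at h
  exact (ENNReal.toReal_mono (measure_ne_top _ _) (measure_mono (Ici_subset_Ici.2 hb))).trans h

/-- If `G_γ` is Gamma(γ)-distributed (shape `γ`, rate `1`), then `-γ·log G_γ` converges in
distribution, as `γ → 0+`, to a standard exponential random variable: for every `t ∈ ℝ`,
`Gamma(γ)({x > 0 : -γ log x ≤ t}) → 1 - e^{-t}` if `t ≥ 0` and `→ 0` if `t < 0`. -/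
theorem neg_gamma_log_gammaMeasure_tendsto_exponential (t : ℝ) :
    Tendsto
      (fun γ : ℝ =>
        (gammaMeasure γ 1 {x : ℝ | 0 < x ∧ -(γ * Real.log x) ≤ t}).toReal)
      (nhdsWithin 0 (Set.Ioi 0))
      (nhds (if 0 ≤ t then 1 - Real.exp (-t) else 0)) := by
  have hΓ₁ := tendsto_Gamma_add_one_nhds_zero.mono_left (nhdsWithin_le_nhds (s := Ioi 0))
  have hΓ₀ := tendsto_inv_Gamma_nhds_zero.mono_left (nhdsWithin_le_nhds (s := Ioi 0))
  have hpos : ∀ᶠ γ : ℝ in 𝓝[>] 0, 0 < γ := self_mem_nhdsWithin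
  have hset : (fun γ : ℝ => (gammaMeasure γ 1 (Ici (exp (-t / γ)))).toReal) =ᶠ[𝓝[>] 0]
      fun γ => (gammaMeasure γ 1 {x : ℝ | 0 < x ∧ -(γ * log x) ≤ t}).toReal :=
    hpos.mono fun γ hγ => by
      dsimp only
      rw [setOf_neg_mul_log_le_eq_Ici hγ]
  refine Tendsto.congr' hset ?_
  split_ifs with ht
  · have hbounds := hpos.mono fun γ hγ => gammaMeasure_one_Ici_exp_neg_div_toReal_bounds hγ ht
    have hlow : Tendsto (fun γ => 1 - exp (-t) / Gamma (γ + 1)) (𝓝[>] 0) (𝓝 (1 - exp (-t))) := by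
      simpa using (tendsto_const_nhds.div hΓ₁ one_ne_zero).const_sub 1
    exact tendsto_of_tendsto_of_tendsto_of_le_of_le' hlow (by simpa using hlow.add hΓ₀)
      (hbounds.mono fun _ => And.left) (hbounds.mono fun _ => And.right)
  · have hup : Tendsto (fun γ => 1 - 1 / Gamma (γ + 1) + (Gamma γ)⁻¹) (𝓝[>] 0) (𝓝 0) := by
      simpa using (((tendsto_const_nhds (x := (1 : ℝ))).div hΓ₁ one_ne_zero).const_sub 1).add hΓ₀
    refine tendsto_of_tendsto_of_tendsto_of_le_of_le' tendsto_const_nhds hup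
      (Eventually.of_forall fun γ => ENNReal.toReal_nonneg) (hpos.mono fun γ hγ => ?_)
    exact gammaMeasure_one_Ici_toReal_le_of_one_le hγ
      (one_le_exp_iff.2 (div_nonneg (by linarith) hγ.le))
end
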